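/- arXiv:1211.4134 — 9 statements merged into one kernel-verified Lean document; each statement's English description precedes it below -/
import Mathlib

section
/- Let κ be a regular uncountable cardinal. For every bounded operator x on ℓ²(κ) there exists a club C in κ such that x ∈ D[C], i.e., for every α ∈ C the subspace ℓ²(α) is invariant under both x and x*. -/
noncomputable section

open Set

/-- The Hilbert space ℓ²(o): square-summable families indexed by the ordinals below `o`. -/
abbrev L2 (o : Ordinal) : Type := ↥(lp (fun _ : o.ToType => ℂ) 2)

/-- Bounded linear operators on ℓ²(o). -/
abbrev Bd (o : Ordinal) : Type := L2 o →L[ℂ] L2 o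

/-- The ordinal (below `o`) corresponding to an index `i` of ℓ²(o). -/
def ordOf {o : Ordinal} (i : o.ToType) : Ordinal := ((Ordinal.ToType.mk (o := o)).symm i : Ordinal)

/-- `InvOn o S x` : the closed subspace of ℓ²(o) of functions supported on `S`
is an invariant subspace of `x`. -/
def InvOn (o : Ordinal) (S : Set Ordinal) (x : Bd o) : Prop :=
  ∀ f : L2 o, (∀ i : o.ToType, ordOf i ∉ S → f i = 0) →
    ∀ i : o.ToType, ordOf i ∉ S → x f i = 0

/-- `Dclub o C` (the algebra `D[C]`) is the set of bounded operators `x` on ℓ²(o) such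
that for every `α ∈ C`, ℓ²(α) is an invariant subspace of both `x` and its adjoint. -/
def Dclub (o : Ordinal) (C : Set Ordinal) : Set (Bd o) :=
  {x | ∀ α ∈ C, InvOn o (Set.Iio α) x ∧ InvOn o (Set.Iio α) (star x)}

/-- A club in (the ordinal) `o`: a closed unbounded subset of `o`. -/
def IsClubOrd (o : Ordinal) (C : Set Ordinal) : Prop :=
  C ⊆ Set.Iio o ∧
  (∀ s ⊆ C, s.Nonempty → sSup s < o → sSup s ∈ C) ∧
  (∀ α < o, ∃ β ∈ C, α < β)

/-- The least element of `C` strictly above `α`. -/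
def clubSucc (C : Set Ordinal) (α : Ordinal) : Ordinal :=
  sInf {β | β ∈ C ∧ α < β}

/-- `memJ κ x` : the (Hilbert space) dimension of the range of `x` is `< κ`;
equivalently (for uncountable κ), the range of `x` is contained in the closure
of a set of cardinality `< κ`. -/
def memJ (κ : Cardinal) {o : Ordinal} (x : Bd o) : Prop :=
  ∃ D : Set (L2 o), Cardinal.mk D < κ ∧ Set.range ⇑x ⊆ closure D


/-!
The vectors `x eᵢ` and `x* eᵢ` have countable support, so by regularity of `κ` the map sending `i`
to the supremum of these supports is a map `κ → κ`. Its closure points form a club, and at a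
closure point `α` both `x` and `x*` send every `eᵢ` with `i < α` into `ℓ²(α)`; by continuity they
then map all of `ℓ²(α)` into itself.
-/

open Cardinal Ordinal

theorem Memℓp.countable_setOf_ne_zero {α : Type*} {E : α → Type*} [∀ i, NormedAddCommGroup (E i)]
    {p : ENNReal} {f : ∀ i, E i} (hf : Memℓp f p) (hp : 0 < p.toReal) :
    {i | f i ≠ 0}.Countable := by
  refine (hf.summable hp).countable_support.mono fun i hi => ?_
  simpa [Function.mem_support, Real.rpow_eq_zero (norm_nonneg _) hp.ne'] using hi

lemma ordOf_lt {o : Ordinal} (i : o.ToType) : ordOf i < o :=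
  ((ToType.mk (o := o)).symm i).2

lemma invOn_of_single {o : Ordinal} {S : Set Ordinal} {y : Bd o}
    (hy : ∀ i j : o.ToType, ordOf i ∈ S → ordOf j ∉ S → y (lp.single 2 i 1) j = 0) :
    InvOn o S y := by
  intro f hf j hj
  have hsum : HasSum (fun i => y (lp.single 2 i (f i)) j) (y f j) :=
    ((lp.evalCLM ℂ _ 2 j).comp y).hasSum (lp.hasSum_single ENNReal.ofNat_ne_top f)
  refine hsum.unique (hasSum_zero.congr_fun fun i => ?_)
  have hsingle : lp.single 2 i (f i) = f i • lp.single (E := fun _ : o.ToType => ℂ) 2 i 1 := by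
    rw [← lp.single_smul, _root_.smul_eq_mul, mul_one]
  by_cases hi : ordOf i ∈ S
  · simp [hsingle, hy i j hi hj]
  · simp [hf i hi]

def supportBound {o : Ordinal} (y : Bd o) (i : o.ToType) : Ordinal :=
  ⨆ j : {j : o.ToType // y (lp.single 2 i 1) j ≠ 0}, ordOf j.1 + 1

lemma ordOf_lt_supportBound {o : Ordinal} {y : Bd o} {i j : o.ToType}
    (h : y (lp.single 2 i 1) j ≠ 0) : ordOf j < supportBound y i :=
  lt_iSup_add_one (fun j : {j : o.ToType // y (lp.single 2 i 1) j ≠ 0} => ordOf j.1) ⟨j, h⟩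

lemma invOn_Iio_of_supportBound_le {o α : Ordinal} {y : Bd o}
    (h : ∀ i : o.ToType, ordOf i < α → supportBound y i ≤ α) : InvOn o (Iio α) y :=
  invOn_of_single fun i _ hi hj => not_ne_iff.mp fun hij =>
    hj ((ordOf_lt_supportBound hij).trans_le (h i hi))

lemma supportBound_lt_ord {κ : Cardinal} (hreg : κ.IsRegular) (hunc : ℵ₀ < κ) (y : Bd κ.ord)
    (i : κ.ord.ToType) : supportBound y i < κ.ord := by
  have : Countable {j : κ.ord.ToType // y (lp.single 2 i 1) j ≠ 0} :=
    ((lp.memℓp _).countable_setOf_ne_zero (by norm_num)).to_subtype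
  exact iSup_add_one_lt_of_lt_cof (by rw [hreg.cof_ord]; exact mk_le_aleph0.trans_lt hunc)
    fun j => ordOf_lt j.1

theorem exists_gt_forall_lt_map_lt {κ : Cardinal} (hreg : κ.IsRegular) (hunc : ℵ₀ < κ)
    {f : Ordinal → Ordinal} (hf : ∀ β < κ.ord, f β < κ.ord) {α : Ordinal} (hα : α < κ.ord) :
    ∃ δ < κ.ord, α < δ ∧ ∀ β < δ, f β < δ := by
  have hlim : Order.IsSuccLimit κ.ord := isSuccLimit_ord hreg.aleph0_le
  -- a monotone majorant of `f + 1`, so that the iterates of `g` from `α + 1` close under `f`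
  set g : Ordinal → Ordinal := fun β => ⨆ γ : Iio (β + 1), f γ + 1
  have hg_mono : Monotone g := fun β β' h =>
    Ordinal.iSup_le fun γ => Ordinal.le_iSup (fun γ : Iio (β' + 1) => f γ + 1)
      ⟨γ, mem_Iio.2 (lt_of_lt_of_le γ.2 (by gcongr))⟩
  have hg_lt : ∀ β < κ.ord, g β < κ.ord := fun β hβ => by
    refine lift_iSup_add_one_lt_of_lt_cof ?_ fun γ => hf γ (γ.2.trans_le ?_)
    · rw [Cardinal.mk_Iio_ordinal, Cardinal.lift_lift, ← lift_cof, hreg.cof_ord, Cardinal.lift_lt]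
      exact lt_ord.mp (hlim.add_one_lt hβ)
    · exact (Order.add_one_le_iff).mpr hβ
  refine ⟨nfp g (α + 1), nfp_lt_ord (by rwa [hreg.cof_ord]) hg_lt (hlim.add_one_lt hα),
    (lt_add_one α).trans_le (le_nfp g _), fun β hβ => ?_⟩
  obtain ⟨n, hn⟩ := lt_nfp_iff.mp hβ
  calc f β < g β := lt_iSup_add_one (fun γ : Iio (β + 1) => f γ) ⟨β, lt_add_one β⟩
    _ ≤ g^[n + 1] (α + 1) := by rw [Function.iterate_succ_apply']; exact hg_mono hn.le
    _ ≤ nfp g (α + 1) := iterate_le_nfp g _ _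

theorem isClubOrd_setOf_forall_lt_map_lt {κ : Cardinal} (hreg : κ.IsRegular) (hunc : ℵ₀ < κ)
    {f : Ordinal → Ordinal} (hf : ∀ β < κ.ord, f β < κ.ord) :
    IsClubOrd κ.ord {α | α < κ.ord ∧ ∀ β < α, f β < α} := by
  refine ⟨fun α hα => hα.1, fun s hs hne hlt => ⟨hlt, fun β hβ => ?_⟩, fun α hα => ?_⟩
  · obtain ⟨a, has, hβa⟩ := exists_lt_of_lt_csSup hne hβ
    exact ((hs has).2 β hβa).trans_le (le_csSup ⟨κ.ord, fun z hz => (hs hz).1.le⟩ has)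
  · obtain ⟨δ, hδ, hαδ, hδf⟩ := exists_gt_forall_lt_map_lt hreg hunc hf hα
    exact ⟨δ, ⟨hδ, hδf⟩, hαδ⟩

-- junk value `0` when `o ≤ β`
def supportBoundOrd {o : Ordinal} (x : Bd o) (β : Ordinal) : Ordinal :=
  if h : β < o then
    supportBound x (ToType.mk ⟨β, h⟩) ⊔ supportBound (star x) (ToType.mk ⟨β, h⟩)
  else 0

lemma supportBoundOrd_ordOf {o : Ordinal} (x : Bd o) (i : o.ToType) :
    supportBoundOrd x (ordOf i) = supportBound x i ⊔ supportBound (star x) i := by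
  rw [supportBoundOrd, dif_pos (ordOf_lt i)]
  simp [ordOf]

lemma supportBoundOrd_lt_ord {κ : Cardinal} (hreg : κ.IsRegular) (hunc : ℵ₀ < κ) (x : Bd κ.ord)
    {β : Ordinal} (hβ : β < κ.ord) : supportBoundOrd x β < κ.ord := by
  rw [supportBoundOrd, dif_pos hβ]
  exact max_lt (supportBound_lt_ord hreg hunc _ _) (supportBound_lt_ord hreg hunc _ _)

/-- **Lemma (covering).** For κ regular uncountable, every bounded operator on ℓ²(κ)
belongs to `D[C]` for some club `C` in κ. -/
theorem exists_club_mem_Dclub (κ : Cardinal.{0}) (hreg : κ.IsRegular)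
    (hunc : Cardinal.aleph0 < κ) (x : Bd κ.ord) :
    ∃ C : Set Ordinal, IsClubOrd κ.ord C ∧ x ∈ Dclub κ.ord C := by
  refine ⟨_, isClubOrd_setOf_forall_lt_map_lt hreg hunc fun _ => supportBoundOrd_lt_ord hreg hunc x,
    fun α hα => ?_⟩
  have hbound (i : κ.ord.ToType) (hi : ordOf i < α) :
      supportBound x i ⊔ supportBound (star x) i < α :=
    supportBoundOrd_ordOf x i ▸ hα.2 _ hi
  exact ⟨invOn_Iio_of_supportBound_le fun i hi => (le_sup_left.trans_lt (hbound i hi)).le,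
    invOn_Iio_of_supportBound_le fun i hi => (le_sup_right.trans_lt (hbound i hi)).le⟩
end
end

section
/- Let κ be a regular uncountable cardinal and let C and C̃ be clubs in κ with C ⊆* C̃ (i.e., |C \ C̃| < κ). Then for every bounded operator x ∈ D[C̃] there exists y ∈ D[C] such that x − y ∈ J_κ. -/
noncomputable section

open Set

/-- `A ⊆* B` (mod < κ) for sets of ordinals: the cardinality of `A \ B` is `< κ`. -/
def AlmostSub (κ : Cardinal.{0}) (A B : Set Ordinal) : Prop :=
  Cardinal.mk ↥(A \ B) < Cardinal.lift.{1, 0} κ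

/-!
Since `C \ C̃` has size `< κ` and `κ` is regular, it is bounded by some `γ < κ`, so every
`α ∈ C` with `γ ≤ α` lies in `C̃`. Let `P` be the coordinate projection onto `ℓ²(γ)` and
`Q = 1 - P`. The compression `y = Q x Q` lies in `D[C]`: for `γ ≤ α` it inherits the invariance
of `x`, and for `α < γ` it vanishes on `ℓ²(α)`. Finally `x - y = P x + Q x P`, and `J_κ` is an
ideal containing `P`, because `ℓ²(γ)` is the closure of a set of size `max ℵ₀ |γ| < κ`.
-/

open scoped Cardinal ENNReal Pointwise

universe u

section lpIndicator

variable (𝕜 : Type*) {ι E : Type*} [NormedField 𝕜] [NormedAddCommGroup E] [NormedSpace 𝕜 E]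
  {p : ℝ≥0∞} [Fact (1 ≤ p)]

def lpIndicator (s : Set ι) : lp (fun _ : ι => E) p →L[𝕜] lp (fun _ : ι => E) p :=
  LinearMap.mkContinuous
    { toFun f := ⟨s.indicator f, (lp.memℓp f).mono' (norm_indicator_le_norm_self f)⟩
      map_add' f g := lp.ext (s.indicator_add f g)
      map_smul' c f := lp.ext (s.indicator_const_smul c f) }
    1 fun f => by
      rw [one_mul]
      exact lp.norm_mono (zero_lt_one.trans_le Fact.out).ne' (norm_indicator_le_norm_self f)

variable {𝕜}

theorem lpIndicator_apply (s : Set ι) (f : lp (fun _ : ι => E) p) (i : ι) :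
    lpIndicator 𝕜 s f i = s.indicator f i :=
  rfl

theorem lpIndicator_eq_zero {s : Set ι} {f : lp (fun _ : ι => E) p} (hf : ∀ i ∈ s, f i = 0) :
    lpIndicator 𝕜 s f = 0 :=
  lp.ext (funext fun i => Set.indicator_apply_eq_zero.2 (hf i))

theorem lpIndicator_add_compl (s : Set ι) :
    lpIndicator 𝕜 s + lpIndicator 𝕜 sᶜ = (1 : lp (fun _ : ι => E) p →L[𝕜] _) := by
  ext1 f
  exact lp.ext (s.indicator_self_add_compl f)

end lpIndicator

theorem isSelfAdjoint_lpIndicator {𝕜 ι E : Type*} [RCLike 𝕜] [NormedAddCommGroup E]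
    [InnerProductSpace 𝕜 E] [CompleteSpace E] (s : Set ι) :
    IsSelfAdjoint (lpIndicator 𝕜 s : lp (fun _ : ι => E) 2 →L[𝕜] _) := by
  rw [ContinuousLinearMap.isSelfAdjoint_iff_isSymmetric]
  intro f g
  simp only [ContinuousLinearMap.coe_coe, lp.inner_eq_tsum, lpIndicator_apply]
  congr 1 with i
  by_cases hi : i ∈ s <;> simp [hi]

theorem AddSubmonoid.cardinalMk_closure_le_max {M : Type u} [AddMonoid M] (t : Set M) :
    #(closure t) ≤ max ℵ₀ #t := by
  rw [closure_eq_mrange]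
  change #(range _) ≤ _
  exact Cardinal.mk_range_le.trans <|
    (Cardinal.mk_congr FreeAddMonoid.toList).trans_le (Cardinal.mk_list_le_max _)

theorem exists_card_le_subset_closure_lp {ι E : Type u} [NormedAddCommGroup E]
    [TopologicalSpace.SeparableSpace E] {p : ℝ≥0∞} [Fact (1 ≤ p)] (hp : p ≠ ⊤) (s : Set ι) :
    ∃ D : Set (lp (fun _ : ι => E) p), #D ≤ max ℵ₀ #s ∧ {f | ∀ i ∉ s, f i = 0} ⊆ closure D := by
  classical
  obtain ⟨K, hKc, hKd⟩ := TopologicalSpace.exists_countable_dense E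
  let g (j : s × K) : lp (fun _ : ι => E) p := lp.single p j.1 j.2
  set M := AddSubmonoid.closure (range g)
  refine ⟨M, ?_, fun f hf => ?_⟩
  · calc #M ≤ max ℵ₀ #(range g) := AddSubmonoid.cardinalMk_closure_le_max _
      _ ≤ max ℵ₀ #(s × K) := max_le_max_left _ Cardinal.mk_range_le
      _ ≤ max ℵ₀ #s := by
          refine max_le (le_max_left _ _) ?_
          rw [Cardinal.mk_prod, Cardinal.lift_id, Cardinal.lift_id]
          calc #s * #K ≤ #s * ℵ₀ := by gcongr; exact hKc.le_aleph0
            _ ≤ max ℵ₀ #s :=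
              (Cardinal.mul_le_max _ _).trans_eq (by rw [max_assoc, max_self, max_comm])
  · rw [← (lp.hasSum_single hp f).tsum_eq, ← AddSubmonoid.coe_topologicalClosure]
    refine tsum_mem M.isClosed_topologicalClosure fun i => ?_
    by_cases hi : i ∈ s
    · have hsingle := (lp.isometry_single (E := fun _ : ι => E) (p := p) i).continuous
        |>.range_subset_closure_image_dense hKd ⟨f i, rfl⟩
      refine closure_mono ?_ hsingle
      rintro _ ⟨k, hk, rfl⟩
      exact AddSubmonoid.subset_closure ⟨(⟨i, hi⟩, ⟨k, hk⟩), rfl⟩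
    · simp [hf i hi, zero_mem]

section Truncation

variable {o : Ordinal}

theorem ordOf_injective : Function.Injective (ordOf (o := o)) :=
  Subtype.val_injective.comp Ordinal.ToType.mk.symm.injective

theorem InvOn.mul {S : Set Ordinal} {x y : Bd o} (hx : InvOn o S x) (hy : InvOn o S y) :
    InvOn o S (x * y) :=
  fun f hf => hx _ (hy f hf)

theorem invOn_lpIndicator (S : Set Ordinal) (t : Set o.ToType) :
    InvOn o S (lpIndicator ℂ t) := by
  intro f hf i hi
  simp [lpIndicator_apply, hf i hi]

theorem invOn_Iio_conj_lpIndicator_compl {x : Bd o} {α γ : Ordinal}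
    (hx : γ ≤ α → InvOn o (Iio α) x) :
    InvOn o (Iio α) (lpIndicator ℂ {i | ordOf i < γ}ᶜ * x * lpIndicator ℂ {i | ordOf i < γ}ᶜ) := by
  rcases le_or_gt γ α with hγα | hαγ
  · exact ((invOn_lpIndicator _ _).mul (hx hγα)).mul (invOn_lpIndicator _ _)
  · intro f hf i _
    have hQf : lpIndicator ℂ {i | ordOf i < γ}ᶜ f = 0 :=
      lpIndicator_eq_zero fun j hj => hf j fun hjα =>
        hj (show ordOf j < γ from (mem_Iio.1 hjα).trans hαγ)
    simp [hQf]

theorem cardinalMk_ordOf_lt {γ : Ordinal} : #{i : o.ToType | ordOf i < γ} ≤ γ.card := by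
  rw [← Cardinal.mk_toType γ]
  refine Cardinal.mk_le_of_injective (f := fun i => Ordinal.ToType.mk ⟨ordOf i.1, i.2⟩) ?_
  intro i j hij
  exact Subtype.ext (ordOf_injective (Subtype.mk.inj ((Ordinal.ToType.mk (o := γ)).injective hij)))

end Truncation

section IdealJ

variable {κ : Cardinal} {o : Ordinal}

theorem memJ.add (hκ : ℵ₀ ≤ κ) {a b : Bd o} (ha : memJ κ a) (hb : memJ κ b) : memJ κ (a + b) := by
  obtain ⟨A, hAκ, hA⟩ := ha
  obtain ⟨B, hBκ, hB⟩ := hb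
  refine ⟨A + B, Cardinal.mk_add_le.trans_lt (Cardinal.mul_lt_of_lt hκ hAκ hBκ), ?_⟩
  rintro _ ⟨f, rfl⟩
  exact map_mem_closure₂ (f := (· + ·)) continuous_add (hA ⟨f, rfl⟩) (hB ⟨f, rfl⟩)
    fun _ hu _ hv => Set.add_mem_add hu hv

theorem memJ.mul_right {a : Bd o} (ha : memJ κ a) (b : Bd o) : memJ κ (a * b) := by
  obtain ⟨A, hAκ, hA⟩ := ha
  exact ⟨A, hAκ, (range_comp_subset_range b a).trans hA⟩

theorem memJ.mul_left {a : Bd o} (ha : memJ κ a) (b : Bd o) : memJ κ (b * a) := by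
  obtain ⟨A, hAκ, hA⟩ := ha
  refine ⟨b '' A, Cardinal.mk_image_le.trans_lt hAκ, ?_⟩
  rintro _ ⟨f, rfl⟩
  exact image_closure_subset_closure_image b.continuous ⟨a f, hA ⟨f, rfl⟩, rfl⟩

theorem memJ_lpIndicator (hκ : ℵ₀ < κ) {s : Set o.ToType} (hs : #s < κ) :
    memJ κ (lpIndicator ℂ s : Bd o) := by
  obtain ⟨D, hDκ, hD⟩ := exists_card_le_subset_closure_lp (E := ℂ) (p := 2) ENNReal.ofNat_ne_top s
  refine ⟨D, hDκ.trans_lt (max_lt hκ hs), ?_⟩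
  rintro _ ⟨f, rfl⟩
  exact hD fun i hi => by simp [lpIndicator_apply, hi]

end IdealJ

theorem AlmostSub.exists_diff_subset_Iio {κ : Cardinal.{0}} (hκ : κ.IsRegular) {A B : Set Ordinal}
    (hA : A ⊆ Iio κ.ord) (h : AlmostSub κ A B) : ∃ γ < κ.ord, A \ B ⊆ Iio γ := by
  refine ⟨sSup ((· + 1) '' (A \ B)), Ordinal.sSup_add_one_lt_of_lt_cof ?_ fun a ha => hA ha.1,
    fun a ha => mem_Iio.2 <| (Order.lt_add_one_iff.2 le_rfl).trans_le (le_csSup ?_ ⟨a, ha, rfl⟩)⟩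
  · rwa [← Ordinal.lift_cof, hκ.cof_ord]
  · exact ⟨κ.ord, by rintro _ ⟨b, hb, rfl⟩; exact Order.add_one_le_of_lt (hA hb.1)⟩

theorem sub_mul_mul_eq_of_add_eq_one {R : Type*} [Ring R] {p q : R} (h : p + q = 1) (x : R) :
    x - q * x * q = p * x + q * x * p := by
  obtain rfl : q = 1 - p := eq_sub_of_add_eq' h
  noncomm_ring

theorem Dclub_almost_subset_general (κ : Cardinal.{0}) (hreg : κ.IsRegular)
    (hunc : Cardinal.aleph0 < κ) (C Ct : Set Ordinal)
    (hC : IsClubOrd κ.ord C)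
    (hsub : AlmostSub κ C Ct) :
    ∀ x ∈ Dclub κ.ord Ct, ∃ y ∈ Dclub κ.ord C, memJ κ (x - y) := by
  intro x hx
  obtain ⟨γ, hγ, hdiff⟩ := hsub.exists_diff_subset_Iio hreg hC.1
  have htail : ∀ α ∈ C, γ ≤ α → α ∈ Ct := fun α hα hγα =>
    by_contra fun hα' => (hdiff ⟨hα, hα'⟩).not_ge hγα
  set s : Set (κ.ord).ToType := {i | ordOf i < γ}
  set Q : Bd κ.ord := lpIndicator ℂ sᶜ
  have hP : memJ κ (lpIndicator ℂ s : Bd κ.ord) :=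
    memJ_lpIndicator hunc (cardinalMk_ordOf_lt.trans_lt (Cardinal.lt_ord.1 hγ))
  refine ⟨Q * x * Q, fun α hα => ⟨?_, ?_⟩, ?_⟩
  · exact invOn_Iio_conj_lpIndicator_compl fun h => (hx α (htail α hα h)).1
  · rw [star_mul, star_mul, (isSelfAdjoint_lpIndicator _).star_eq, ← mul_assoc]
    exact invOn_Iio_conj_lpIndicator_compl fun h => (hx α (htail α hα h)).2
  · rw [sub_mul_mul_eq_of_add_eq_one (lpIndicator_add_compl s)]
    exact (hP.mul_right x).add hunc.le (hP.mul_left _)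

/-- **Lemma.** If `C ⊆* C̃` are clubs in a regular uncountable κ, then every `x ∈ D[C̃]`
differs from some `y ∈ D[C]` by an element of the ideal J_κ. -/
theorem Dclub_almost_subset (κ : Cardinal.{0}) (hreg : κ.IsRegular)
    (hunc : Cardinal.aleph0 < κ) (C Ct : Set Ordinal)
    (hC : IsClubOrd κ.ord C) (hCt : IsClubOrd κ.ord Ct)
    (hsub : AlmostSub κ C Ct) :
    ∀ x ∈ Dclub κ.ord Ct, ∃ y ∈ Dclub κ.ord C, memJ κ (x - y) :=
  Dclub_almost_subset_general κ hreg hunc C Ct hC hsub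
end
end

section
/- Let κ be a regular uncountable cardinal, let C be a club in κ, and let x be a bounded operator on ℓ²(κ). Then x ∈ D[C] if and only if ℓ²(min C) is an invariant subspace of x and, for every δ ∈ C, ℓ²([δ, succ_C(δ))) is an invariant subspace of x. -/
noncomputable section

open Set

/-- A club in (the ordinal) `o`: a closed unbounded subset of `o`. -/
def IsClubIn (o : Ordinal) (C : Set Ordinal) : Prop :=
  C ⊆ Set.Iio o ∧
  (∀ s ⊆ C, s.Nonempty → sSup s < o → sSup s ∈ C) ∧
  (∀ α < o, ∃ β ∈ C, α < β)

/-!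
An operator `x` leaves ℓ²(S) invariant iff its matrix entries `(x e_j) i` vanish for
`j ∈ S`, `i ∉ S`. Hence invariance passes to intersections and to arbitrary unions, and `x*`
leaves ℓ²(S) invariant iff `x` leaves ℓ²(Sᶜ) invariant. So `x ∈ D[C]` iff `x` leaves ℓ²([0, α))
and ℓ²([α, κ)) invariant for all `α ∈ C`. Each block `[δ, succ_C δ)` is an intersection of two
such sets; conversely, since `C` is closed, every `β ∈ [min C, κ)` lies in the block starting
at `sup (C ∩ [0, β])`, so `[0, α)` and `[α, κ)` are unions of blocks and of `[0, min C)`.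
-/

section MatrixEntries

variable {ι 𝕜 : Type*}

theorem lp.hasSum_mul_apply_single [NormedField 𝕜] {p : ENNReal} [Fact (1 ≤ p)] (hp : p ≠ ⊤)
    [DecidableEq ι] (x : lp (fun _ : ι => 𝕜) p →L[𝕜] lp (fun _ : ι => 𝕜) p)
    (f : lp (fun _ : ι => 𝕜) p) (i : ι) :
    HasSum (fun j => f j * x (lp.single p j 1) i) (x f i) := by
  have hsingle : ∀ j, lp.single p j (f j) = f j • lp.single (E := fun _ : ι => 𝕜) p j 1 := by
    intro j
    rw [← lp.single_smul, smul_eq_mul, mul_one]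
  simpa [hsingle, lp.evalCLM] using (lp.hasSum_single hp f).mapL ((lp.evalCLM 𝕜 _ p i).comp x)

theorem lp.star_apply_single [RCLike 𝕜] [DecidableEq ι]
    (x : lp (fun _ : ι => 𝕜) 2 →L[𝕜] lp (fun _ : ι => 𝕜) 2) (i j : ι) :
    star x (lp.single 2 j 1) i = starRingEnd 𝕜 (x (lp.single 2 i 1) j) := by
  have hcoord : ∀ (f : lp (fun _ : ι => 𝕜) 2) k, f k = inner 𝕜 (lp.single 2 k (1 : 𝕜)) f := by
    intro f k
    simp [lp.inner_single_left]
  rw [hcoord, ContinuousLinearMap.star_eq_adjoint, ContinuousLinearMap.adjoint_inner_right,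
    lp.inner_single_right]
  simp

end MatrixEntries

section Invariance

variable {o : Ordinal} {S T : Set Ordinal} {x : Bd o}

theorem invOn_iff_single :
    InvOn o S x ↔ ∀ j i : o.ToType, ordOf j ∈ S → ordOf i ∉ S → x (lp.single 2 j 1) i = 0 := by
  refine ⟨fun h j i hj hi => h _ (fun k hk => lp.single_apply_ne 2 j 1 ?_) i hi,
    fun h f hf i hi => ?_⟩
  · rintro rfl
    exact hk hj
  have hterm : ∀ j, f j * x (lp.single 2 j 1) i = 0 := by
    intro j
    by_cases hj : ordOf j ∈ S
    · rw [h j i hj hi, mul_zero]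
    · rw [hf j hj, zero_mul]
  have hsum := lp.hasSum_mul_apply_single ENNReal.ofNat_ne_top x f i
  simp only [hterm] at hsum
  exact hsum.unique hasSum_zero

theorem invOn_star_iff : InvOn o S (star x) ↔ InvOn o Sᶜ x := by
  simp only [invOn_iff_single, lp.star_apply_single, map_eq_zero, mem_compl_iff, not_not]
  exact ⟨fun h j i hj hi => h i j hi hj, fun h j i hj hi => h i j hi hj⟩

theorem invOn_of_disjoint_Iio (h : Disjoint S (Iio o)) : InvOn o S x :=
  invOn_iff_single.2 fun j _ hj _ =>
    absurd ((Ordinal.ToType.mk (o := o)).symm j).2 (h.notMem_of_mem_left hj)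

theorem InvOn.inter (hS : InvOn o S x) (hT : InvOn o T x) : InvOn o (S ∩ T) x := by
  rw [invOn_iff_single] at *
  intro j i hj hi
  rcases not_and_or.1 hi with hiS | hiT
  exacts [hS j i hj.1 hiS, hT j i hj.2 hiT]

theorem InvOn.union (hS : InvOn o S x) (hT : InvOn o T x) : InvOn o (S ∪ T) x := by
  rw [invOn_iff_single] at *
  intro j i hj hi
  rcases hj with hjS | hjT
  exacts [hS j i hjS fun h => hi (.inl h), hT j i hjT fun h => hi (.inr h)]

theorem InvOn.iUnion {ι : Sort*} {F : ι → Set Ordinal} (h : ∀ k, InvOn o (F k) x) :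
    InvOn o (⋃ k, F k) x := by
  refine invOn_iff_single.2 fun j i hj hi => ?_
  obtain ⟨k, hk⟩ := mem_iUnion.1 hj
  exact invOn_iff_single.1 (h k) j i hk fun h => hi (mem_iUnion.2 ⟨k, h⟩)

theorem InvOn.biUnion {F : Ordinal → Set Ordinal} (h : ∀ δ ∈ T, InvOn o (F δ) x) :
    InvOn o (⋃ δ ∈ T, F δ) x :=
  InvOn.iUnion fun δ => InvOn.iUnion fun hδ => h δ hδ

theorem mem_Dclub_iff {C : Set Ordinal} :
    x ∈ Dclub o C ↔ ∀ α ∈ C, InvOn o (Iio α) x ∧ InvOn o (Ici α) x := by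
  simp only [Dclub, mem_ofPred_eq, invOn_star_iff, compl_Iio]

end Invariance

section Club

variable {o α β δ : Ordinal} {C : Set Ordinal}

theorem clubSucc_le (hα : α ∈ C) (h : δ < α) : clubSucc C δ ≤ α :=
  csInf_le' ⟨hα, h⟩

theorem IsClubIn.clubSucc_spec (hC : IsClubIn o C) (hδ : δ ∈ C) :
    clubSucc C δ ∈ C ∧ δ < clubSucc C δ :=
  let ⟨β, hβ, hδβ⟩ := hC.2.2 δ (hC.1 hδ)
  csInf_mem (s := {β | β ∈ C ∧ δ < β}) ⟨β, hβ, hδβ⟩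

theorem IsClubIn.exists_block (hC : IsClubIn o C) (hβ : β < o) (hmin : sInf C ≤ β) :
    ∃ δ ∈ C, β ∈ Ico δ (clubSucc C δ) ∧ ∀ α ∈ C, α ≤ β → α ≤ δ := by
  obtain ⟨γ, hγ, -⟩ := hC.2.2 β hβ
  have hne : (C ∩ Iic β).Nonempty := ⟨sInf C, csInf_mem ⟨γ, hγ⟩, hmin⟩
  have hle : sSup (C ∩ Iic β) ≤ β := csSup_le hne fun _ h => h.2
  have hmax : ∀ α ∈ C, α ≤ β → α ≤ sSup (C ∩ Iic β) :=
    fun α hα h => le_csSup ⟨β, fun _ h => h.2⟩ ⟨hα, h⟩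
  have hmem : sSup (C ∩ Iic β) ∈ C := hC.2.1 _ inter_subset_left hne (hle.trans_lt hβ)
  refine ⟨_, hmem, ⟨hle, lt_of_not_ge fun hsucc => ?_⟩, hmax⟩
  obtain ⟨hsuccC, hlt⟩ := hC.clubSucc_spec hmem
  exact (hmax _ hsuccC hsucc).not_gt hlt

theorem IsClubIn.Iio_eq_union_Ico_clubSucc (hC : IsClubIn o C) (hα : α ∈ C) :
    Iio α = Iio (sInf C) ∪ ⋃ δ ∈ C ∩ Iio α, Ico δ (clubSucc C δ) := by
  ext β
  simp only [mem_union, mem_iUnion₂, mem_Iio, mem_inter_iff, exists_prop]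
  constructor
  · intro hβα
    refine (lt_or_ge β (sInf C)).imp id fun hmin => ?_
    obtain ⟨δ, hδC, hβδ, -⟩ := hC.exists_block (hβα.trans (hC.1 hα)) hmin
    exact ⟨δ, ⟨hδC, hβδ.1.trans_lt hβα⟩, hβδ⟩
  · rintro (hβ | ⟨δ, ⟨-, hδα⟩, hβδ⟩)
    exacts [hβ.trans_le (csInf_le' hα), hβδ.2.trans_le (clubSucc_le hα hδα)]

theorem IsClubIn.Ici_eq_union_Ico_clubSucc (hC : IsClubIn o C) (hα : α ∈ C) :
    Ici α = (⋃ δ ∈ C ∩ Ici α, Ico δ (clubSucc C δ)) ∪ Ici o := by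
  ext β
  simp only [mem_union, mem_iUnion₂, mem_Ici, mem_inter_iff, exists_prop]
  constructor
  · intro hαβ
    refine (lt_or_ge β o).imp (fun hβ => ?_) id
    obtain ⟨δ, hδC, hβδ, hmax⟩ := hC.exists_block hβ ((csInf_le' hα).trans hαβ)
    exact ⟨δ, ⟨hδC, hmax α hα hαβ⟩, hβδ⟩
  · rintro (⟨δ, ⟨-, hαδ⟩, hβδ⟩ | hβ)
    exacts [hαδ.trans hβδ.1, (hC.1 hα).le.trans hβ]

end Club

theorem mem_Dclub_iff_blocks_general (κ : Cardinal.{0}) (C : Set Ordinal) (hC : IsClubIn κ.ord C)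
    (x : Bd κ.ord) :
    x ∈ Dclub κ.ord C ↔
      (InvOn κ.ord (Set.Iio (sInf C)) x ∧
        ∀ δ ∈ C, InvOn κ.ord (Set.Ico δ (clubSucc C δ)) x) := by
  rw [mem_Dclub_iff]
  constructor
  · intro h
    refine ⟨?_, fun δ hδ => ?_⟩
    · rcases C.eq_empty_or_nonempty with rfl | hne
      · exact invOn_of_disjoint_Iio (by simp [Ordinal.sInf_empty])
      · exact (h _ (csInf_mem hne)).1
    · rw [← Ici_inter_Iio]
      exact (h δ hδ).2.inter (h _ (hC.clubSucc_spec hδ).1).1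
  · rintro ⟨hmin, hblocks⟩ α hα
    have hunion : ∀ T ⊆ C, InvOn κ.ord (⋃ δ ∈ T, Ico δ (clubSucc C δ)) x :=
      fun T hT => InvOn.biUnion fun δ hδ => hblocks δ (hT hδ)
    rw [hC.Iio_eq_union_Ico_clubSucc hα, hC.Ici_eq_union_Ico_clubSucc hα]
    exact ⟨hmin.union (hunion _ inter_subset_left),
      (hunion _ inter_subset_left).union (invOn_of_disjoint_Iio (Ici_disjoint_Iio le_rfl))⟩

/-- **Lemma.** For κ regular uncountable, a club `C` in κ and a bounded operator `x` on
ℓ²(κ): `x ∈ D[C]` if and only if ℓ²(min C) is an invariant subspace of `x` and, for every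
`δ ∈ C`, ℓ²([δ, succ_C δ)) is an invariant subspace of `x`. -/
theorem mem_Dclub_iff_blocks (κ : Cardinal.{0}) (hreg : κ.IsRegular)
    (hunc : Cardinal.aleph0 < κ) (C : Set Ordinal) (hC : IsClubIn κ.ord C)
    (x : Bd κ.ord) :
    x ∈ Dclub κ.ord C ↔
      (InvOn κ.ord (Set.Iio (sInf C)) x ∧
        ∀ δ ∈ C, InvOn κ.ord (Set.Ico δ (clubSucc C δ)) x) :=
  mem_Dclub_iff_blocks_general κ C hC x
end
end

section
/- Let κ be a regular uncountable cardinal. Then J_κ, the set of bounded operators on ℓ²(κ) whose range has Hilbert space dimension strictly less than κ, is a proper two-sided ideal of B(ℓ²(κ)) which is closed under adjoints and closed in the operator norm topology, and it contains every compact operator on ℓ²(κ). -/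
noncomputable section

open Set

/-- A club in (the ordinal) `o`: a closed unbounded subset of `o`. -/
def IsClub' (o : Ordinal) (C : Set Ordinal) : Prop :=
  C ⊆ Set.Iio o ∧
  (∀ s ⊆ C, s.Nonempty → sSup s < o → sSup s ∈ C) ∧
  (∀ α < o, ∃ β ∈ C, α < β)

/-!
Membership in `J_κ` says that the range lies in the closure of fewer than `κ` vectors, and
such ranges are preserved by continuous images and (as `κ` is infinite) by sums. For the
adjoint, `ker x* = (ran x)ᗮ`, so `x*` takes all its values on the closure of `ran x`. A norm
limit of operators in `J_κ` has range in the closure of a countable union of small sets, which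
is small because `κ` is regular and uncountable; compact operators have separable range. The
identity is not in `J_κ`: the `κ` standard basis vectors are `√2` apart, so a set whose closure
contains them all has at least `κ` points.
-/

open Cardinal Topology Filter Pointwise

universe u

theorem Cardinal.mk_le_of_separated_subset_closure {X ι : Type u} [PseudoMetricSpace X]
    {e : ι → X} {ε : ℝ} (hε : 0 < ε) (he : Pairwise fun i j => ε ≤ dist (e i) (e j))
    {D : Set X} (hD : range e ⊆ closure D) : #ι ≤ #D := by
  have hnear (i : ι) : ∃ d ∈ D, dist (e i) d < ε / 2 :=
    Metric.mem_closure_iff.1 (hD ⟨i, rfl⟩) _ (half_pos hε)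
  choose d hdD hd using hnear
  refine mk_le_of_injective (f := fun i => (⟨d i, hdD i⟩ : D)) fun i j hij => ?_
  by_contra hne
  have hdij : d i = d j := congrArg Subtype.val hij
  have : dist (e i) (e j) < ε :=
    calc dist (e i) (e j) ≤ dist (e i) (d i) + dist (e j) (d j) := by
          rw [hdij]; exact dist_triangle_right _ _ _
      _ < ε / 2 + ε / 2 := add_lt_add (hd i) (hd j)
      _ = ε := add_halves ε
  exact (he hne).not_gt this

theorem Orthonormal.dist_eq_sqrt_two {𝕜 E ι : Type*} [RCLike 𝕜] [NormedAddCommGroup E]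
    [InnerProductSpace 𝕜 E] {v : ι → E} (hv : Orthonormal 𝕜 v) {i j : ι} (hij : i ≠ j) :
    dist (v i) (v j) = √2 := by
  have hsq : ‖v i - v j‖ ^ 2 = 2 := by
    rw [norm_sub_sq (𝕜 := 𝕜), hv.1 i, hv.1 j, hv.2 hij]
    norm_num
  rw [dist_eq_norm, ← hsq, Real.sqrt_sq (norm_nonneg _)]

theorem ContinuousLinearMap.range_adjoint_subset_image_closure_range {𝕜 E F : Type*} [RCLike 𝕜]
    [NormedAddCommGroup E] [InnerProductSpace 𝕜 E] [CompleteSpace E]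
    [NormedAddCommGroup F] [InnerProductSpace 𝕜 F] [CompleteSpace F] (T : E →L[𝕜] F) :
    range (adjoint T) ⊆ adjoint T '' closure (range T) := by
  rintro - ⟨f, rfl⟩
  obtain ⟨g, hg, h, hh, rfl⟩ := T.range.topologicalClosure.exists_add_mem_mem_orthogonal f
  have hker : adjoint T h = 0 := by
    rwa [Submodule.orthogonal_closure, T.orthogonal_range] at hh
  refine ⟨g, ?_, by rw [map_add, hker, add_zero]⟩
  rwa [← SetLike.mem_coe, Submodule.topologicalClosure_coe, LinearMap.coe_range,
    ContinuousLinearMap.coe_coe] at hg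

theorem IsCompactOperator.isSeparable_range {𝕜 E F : Type*} [NontriviallyNormedField 𝕜]
    [SeminormedAddCommGroup E] [NormedSpace 𝕜 E] [NormedAddCommGroup F] [NormedSpace 𝕜 F]
    {T : E →L[𝕜] F} (hT : IsCompactOperator T) : TopologicalSpace.IsSeparable (range T) := by
  have hballs : range T ⊆ ⋃ n : ℕ, T '' Metric.ball 0 n := by
    rintro - ⟨f, rfl⟩
    obtain ⟨n, hn⟩ := exists_nat_gt ‖f‖
    exact mem_iUnion.2 ⟨n, f, mem_ball_zero_iff.2 hn, rfl⟩
  refine .mono (.iUnion fun n => ?_) hballs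
  obtain ⟨K, hK, hTK⟩ := hT.image_ball_subset_compact (f := (T : E →ₗ[𝕜] F)) n
  exact hK.isSeparable.mono hTK

section memJ

variable {κ : Cardinal.{0}} {o : Ordinal}

theorem memJ_zero (hκ : 1 < κ) : memJ κ (0 : Bd o) :=
  ⟨{0}, by simpa using hκ, by
    rintro - ⟨f, rfl⟩
    exact subset_closure rfl⟩

theorem memJ_add (hκ : ℵ₀ ≤ κ) {x y : Bd o} (hx : memJ κ x) (hy : memJ κ y) :
    memJ κ (x + y) := by
  obtain ⟨D, hD, hxD⟩ := hx
  obtain ⟨E, hE, hyE⟩ := hy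
  refine ⟨D + E, mk_add_le.trans_lt (mul_lt_of_lt hκ hD hE), ?_⟩
  rintro - ⟨f, rfl⟩
  exact map_mem_closure₂ (f := (· + ·)) continuous_add (hxD ⟨f, rfl⟩) (hyE ⟨f, rfl⟩)
    fun _ ha _ hb => Set.add_mem_add ha hb

theorem memJ_mul_left (a : Bd o) {x : Bd o} (hx : memJ κ x) : memJ κ (a * x) := by
  obtain ⟨D, hD, hxD⟩ := hx
  refine ⟨a '' D, mk_image_le.trans_lt hD, ?_⟩
  rintro - ⟨f, rfl⟩
  exact image_closure_subset_closure_image a.continuous ⟨x f, hxD ⟨f, rfl⟩, rfl⟩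

theorem memJ_mul_right (a : Bd o) {x : Bd o} (hx : memJ κ x) : memJ κ (x * a) := by
  obtain ⟨D, hD, hxD⟩ := hx
  exact ⟨D, hD, (range_comp_subset_range a x).trans hxD⟩

theorem memJ_smul (c : ℂ) {x : Bd o} (hx : memJ κ x) : memJ κ (c • x) :=
  smul_one_mul c x ▸ memJ_mul_left (c • 1) hx

theorem memJ_neg {x : Bd o} (hx : memJ κ x) : memJ κ (-x) :=
  neg_one_smul ℂ x ▸ memJ_smul (-1) hx

theorem memJ_star {x : Bd o} (hx : memJ κ x) : memJ κ (star x) := by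
  obtain ⟨D, hD, hxD⟩ := hx
  refine ⟨⇑(star x) '' D, mk_image_le.trans_lt hD, ?_⟩
  calc range ⇑(star x) ⊆ ⇑(star x) '' closure (range x) :=
        x.range_adjoint_subset_image_closure_range
    _ ⊆ ⇑(star x) '' closure D := image_mono (closure_minimal hxD isClosed_closure)
    _ ⊆ closure (⇑(star x) '' D) := image_closure_subset_closure_image (star x).continuous

theorem isClosed_setOf_memJ (hreg : κ.IsRegular) (hunc : ℵ₀ < κ) :
    IsClosed {x : Bd o | memJ κ x} := by
  refine IsSeqClosed.isClosed fun u x hu hux => ?_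
  choose D hD huD using hu
  refine ⟨⋃ n, D n, (card_iUnion_lt_iff_forall_of_isRegular hreg (by simpa using hunc)).2 hD, ?_⟩
  rintro - ⟨f, rfl⟩
  have hlim : Tendsto (fun n => u n f) atTop (𝓝 (x f)) :=
    ((ContinuousLinearMap.apply ℂ (L2 o) f).continuous.tendsto x).comp hux
  exact isClosed_closure.mem_of_tendsto hlim (Eventually.of_forall fun n =>
    closure_mono (subset_iUnion D n) (huD n ⟨f, rfl⟩))

theorem memJ_of_isCompactOperator (hunc : ℵ₀ < κ) {x : Bd o} (hx : IsCompactOperator x) :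
    memJ κ x := by
  obtain ⟨D, hD, hxD⟩ := hx.isSeparable_range
  exact ⟨D, hD.le_aleph0.trans_lt hunc, hxD⟩

theorem not_memJ_one (hκo : κ ≤ o.card) : ¬ memJ κ (1 : Bd o) := by
  rintro ⟨D, hD, hD1⟩
  let e : HilbertBasis o.ToType ℂ (L2 o) := default
  have hsep : #o.ToType ≤ #D :=
    mk_le_of_separated_subset_closure (Real.sqrt_pos.2 two_pos)
      (fun i j hij => (e.orthonormal.dist_eq_sqrt_two hij).ge)
      ((range_subset_range_iff_exists_comp.2 ⟨e, rfl⟩).trans hD1)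
  exact (hκo.trans ((mk_toType o).symm.trans_le hsep)).not_gt hD

end memJ

/-- **Lemma.** For κ regular uncountable, J_κ = {x : the range of x has Hilbert dimension
< κ} is a proper, two-sided, adjoint-closed, norm-closed ideal of B(ℓ²(κ)) containing all
compact operators. -/
theorem Jideal_properties (κ : Cardinal.{0}) (hreg : κ.IsRegular)
    (hunc : Cardinal.aleph0 < κ) :
    memJ κ (0 : Bd κ.ord) ∧
    (∀ x y : Bd κ.ord, memJ κ x → memJ κ y → memJ κ (x + y)) ∧
    (∀ x : Bd κ.ord, memJ κ x → memJ κ (-x)) ∧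
    (∀ (c : ℂ) (x : Bd κ.ord), memJ κ x → memJ κ (c • x)) ∧
    (∀ a x : Bd κ.ord, memJ κ x → memJ κ (a * x)) ∧
    (∀ a x : Bd κ.ord, memJ κ x → memJ κ (x * a)) ∧
    (∀ x : Bd κ.ord, memJ κ x → memJ κ (star x)) ∧
    ¬ memJ κ (1 : Bd κ.ord) ∧
    IsClosed {x : Bd κ.ord | memJ κ x} ∧
    (∀ x : Bd κ.ord, IsCompactOperator ⇑x → memJ κ x) :=
  ⟨memJ_zero (one_lt_aleph0.trans hunc), fun _ _ => memJ_add hunc.le, fun _ => memJ_neg,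
    memJ_smul, memJ_mul_left, memJ_mul_right, fun _ => memJ_star,
    not_memJ_one (card_ord κ).ge, isClosed_setOf_memJ hreg hunc,
    fun _ => memJ_of_isCompactOperator hunc⟩
end
end

section
/- Let κ be a regular uncountable cardinal and let θ be an infinite cardinal with θ < κ. Suppose (C_η)_{η<θ} are clubs in κ and (f_η)_{η<θ} are functions κ → {−1, +1} such that: (a) for all ξ < η < θ, C_η ⊆* C_ξ; and (b) for all ξ < η < θ there exists ε < κ such that for every δ ∈ C_ξ with δ ≥ ε, the product function f_ξ · f_η is constant on the interval [δ, succ_{C_ξ}(δ)). Then there exists a function f : κ → {−1, +1} such that for every ξ < θ there exists ε < κ such that for every δ ∈ C_ξ with δ ≥ ε, the function f_ξ · f is constant on the interval [δ, succ_{C_ξ}(δ)). -/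
noncomputable section

/-- `ConstOn h a b` : the function `h` is constant on the ordinal interval `[a, b)`. -/
def ConstOn {β : Type*} (h : Ordinal → β) (a b : Ordinal) : Prop :=
  ∀ ξ η : Ordinal, a ≤ ξ → ξ < b → a ≤ η → η < b → h ξ = h η

/-! Since `θ < κ` and `κ` is regular, a single threshold `ε < κ` serves all pairs `ξ < η < θ`,
both for `C η ⊆ C ξ` and for the coherence of `f ξ ⬝ f η`. Above it, for fixed `ι` the last
point `δ_j(ι)` of `C j` below `ι` is non-increasing in `j`, hence eventually constant, and then
so is `f j ι ⬝ f j δ_j(ι)`; this eventual value is `g ι`. Two points of one interval of `C η`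
have the same `δ_M` for every large `M`, because `C M ⊆ C η` above `ε`, so `f η ⬝ g` is
constant on that interval. -/

universe u

theorem mul_eq_mul_of_mul_eq_mul {M : Type*} [CommMonoid M] {a b c d : M} (hb : b * b = 1)
    (hc : c * c = 1) (h : a * c = b * d) : a * b = c * d :=
  calc a * b = (a * c) * b * c := by rw [mul_right_comm a c b, mul_assoc, hc, mul_one]
    _ = (b * b) * (c * d) := by rw [h]; ac_rfl
    _ = c * d := by rw [hb, one_mul]

theorem AntitoneOn.exists_forall_ge_eq {α β : Type*} [Preorder α] [LinearOrder β]
    [WellFoundedLT β] {s : Set α} {F : α → β} (hF : AntitoneOn F s) (hs : s.Nonempty) :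
    ∃ m ∈ s, ∀ j ∈ s, m ≤ j → F j = F m := by
  obtain ⟨_, ⟨m, hm, rfl⟩, hmin⟩ := wellFounded_lt.has_min (F '' s) (hs.image F)
  exact ⟨m, hm, fun j hj hmj =>
    (hF hm hj hmj).antisymm (not_lt.1 (hmin (F j) ⟨j, hj, rfl⟩))⟩

namespace Cardinal.IsRegular

variable {κ : Cardinal.{u}}

theorem sSup_lt_ord (hκ : κ.IsRegular) {s : Set Ordinal.{u}} (hs : #s < Cardinal.lift.{u + 1} κ)
    (hsκ : ∀ x ∈ s, x < κ.ord) : sSup s < κ.ord :=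
  Ordinal.sSup_lt_of_lt_cof (by rwa [← Ordinal.lift_cof, hκ.cof_ord]) hsκ

theorem exists_lt_ord_forall_le (hκ : κ.IsRegular) {α : Ordinal.{u}} (hα : α.card < κ)
    {F : Ordinal → Ordinal} (hF : ∀ ξ < α, F ξ < κ.ord) : ∃ ε < κ.ord, ∀ ξ < α, F ξ ≤ ε := by
  have hbdd : BddAbove (F '' Set.Iio α) := ⟨κ.ord, by rintro _ ⟨ξ, hξ, rfl⟩; exact (hF ξ hξ).le⟩
  refine ⟨sSup (F '' Set.Iio α), hκ.sSup_lt_ord ?_ ?_, fun ξ hξ => le_csSup hbdd ⟨ξ, hξ, rfl⟩⟩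
  · exact mk_image_le.trans_lt (by rwa [mk_Iio_ordinal, lift_lt])
  · rintro _ ⟨ξ, hξ, rfl⟩
    exact hF ξ hξ

theorem exists_lt_ord_forall_le₂ (hκ : κ.IsRegular) {α : Ordinal.{u}} (hα : α.card < κ)
    {E : Ordinal → Ordinal → Ordinal} (hE : ∀ ξ η, ξ < η → η < α → E ξ η < κ.ord) :
    ∃ ε < κ.ord, ∀ ξ η, ξ < η → η < α → E ξ η ≤ ε := by
  have hrow : ∀ η < α, ∃ ε < κ.ord, ∀ ξ < η, E ξ η ≤ ε := fun η hη =>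
    hκ.exists_lt_ord_forall_le ((Ordinal.card_le_card hη.le).trans_lt hα) fun ξ hξ =>
      hE ξ η hξ hη
  choose! R hRκ hR using hrow
  obtain ⟨ε, hε, hRε⟩ := hκ.exists_lt_ord_forall_le hα hRκ
  exact ⟨ε, hε, fun ξ η hξη hη => (hR η hη ξ hξη).trans (hRε η hη)⟩

end Cardinal.IsRegular

namespace IsClubOrd

variable {o : Ordinal} {C : Set Ordinal} {α : Ordinal}

theorem clubSucc_mem (hC : IsClubOrd o C) (hα : α < o) : clubSucc C α ∈ C :=
  (csInf_mem (s := {β | β ∈ C ∧ α < β}) (hC.2.2 α hα)).1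

theorem lt_clubSucc (hC : IsClubOrd o C) (hα : α < o) : α < clubSucc C α :=
  (csInf_mem (s := {β | β ∈ C ∧ α < β}) (hC.2.2 α hα)).2

theorem clubSucc_lt (hC : IsClubOrd o C) (hα : α < o) : clubSucc C α < o :=
  hC.1 (hC.clubSucc_mem hα)

end IsClubOrd

theorem clubSucc_le_s13 {C : Set Ordinal} {α β : Ordinal} (hβ : β ∈ C) (h : α < β) :
    clubSucc C α ≤ β :=
  csInf_le (OrderBot.bddBelow _) ⟨hβ, h⟩

/-- The largest element of `C` that is `≤ ι`, provided `C` is closed and meets `[0, ι]`. -/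
def lastBelow (C : Set Ordinal) (ι : Ordinal) : Ordinal :=
  sSup (C ∩ Set.Iic ι)

section lastBelow

variable {o : Ordinal} {C : Set Ordinal} {x ι : Ordinal}

theorem le_lastBelow (hx : x ∈ C) (hxι : x ≤ ι) : x ≤ lastBelow C ι :=
  le_csSup ⟨ι, fun _ hy => hy.2⟩ ⟨hx, hxι⟩

theorem lastBelow_le (C : Set Ordinal) (ι : Ordinal) : lastBelow C ι ≤ ι :=
  csSup_le' fun _ hy => hy.2

theorem IsClubOrd.lastBelow_mem (hC : IsClubOrd o C) (hx : x ∈ C) (hxι : x ≤ ι) (hι : ι < o) :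
    lastBelow C ι ∈ C :=
  hC.2.1 _ Set.inter_subset_left ⟨x, hx, hxι⟩ ((lastBelow_le C ι).trans_lt hι)

theorem IsClubOrd.lt_clubSucc_lastBelow (hC : IsClubOrd o C) (hι : ι < o) :
    ι < clubSucc C (lastBelow C ι) := by
  have hδ := (lastBelow_le C ι).trans_lt hι
  by_contra! hle
  exact (hC.lt_clubSucc hδ).not_ge (le_lastBelow (hC.clubSucc_mem hδ) hle)

theorem lastBelow_eq_of_mem_Ico {C D : Set Ordinal} {ε c d ι ι' : Ordinal}
    (hCD : ∀ x ∈ C, ε < x → x ∈ D) (hc : c ∈ C) (hεc : ε < c) (hcd : c ≤ d)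
    (hι : ι ∈ Set.Ico d (clubSucc D d)) (hι' : ι' ∈ Set.Ico d (clubSucc D d)) :
    lastBelow C ι = lastBelow C ι' := by
  have key : ∀ {ι ι'}, ι ∈ Set.Ico d (clubSucc D d) → ι' ∈ Set.Ico d (clubSucc D d) →
      lastBelow C ι' ≤ lastBelow C ι := by
    intro ι ι' hι hι'
    refine csSup_le' fun x ⟨hxC, hxι'⟩ => ?_
    rcases le_or_gt x ε with hxε | hεx
    · exact (hxε.trans hεc.le).trans (le_lastBelow hc (hcd.trans hι.1))
    · have hxd : x ≤ d := not_lt.1 fun hdx =>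
        ((clubSucc_le_s13 (hCD x hxC hεx) hdx).trans hxι').not_gt hι'.2
      exact le_lastBelow hxC (hxd.trans hι.1)
  exact (key hι' hι).antisymm (key hι hι')

end lastBelow

/-- The hypotheses of the theorem, with a single threshold `ε` serving all pairs `ξ < η < Θ`. -/
structure IsCoherentAbove (o Θ ε : Ordinal) (C : Ordinal → Set Ordinal)
    (f : Ordinal → Ordinal → ℤ) : Prop where
  isClub : ∀ η < Θ, IsClubOrd o (C η)
  isUnit : ∀ η < Θ, ∀ ι, IsUnit (f η ι)
  mem_of_lt : ∀ ξ η, ξ < η → η < Θ → ∀ x ∈ C η, ε < x → x ∈ C ξ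
  constOn : ∀ ξ η, ξ < η → η < Θ → ∀ δ ∈ C ξ, ε < δ →
    ConstOn (fun ι => f ξ ι * f η ι) δ (clubSucc (C ξ) δ)

namespace IsCoherentAbove

variable {o Θ ε ε' : Ordinal} {C : Ordinal → Set Ordinal} {f : Ordinal → Ordinal → ℤ}

theorem mul_eq_mul_of_mem_Ico (h : IsCoherentAbove o Θ ε C f) {j M δ ι : Ordinal} (hjM : j < M)
    (hM : M < Θ) (hδ : δ ∈ C j) (hεδ : ε < δ) (hι : ι ∈ Set.Ico δ (clubSucc (C j) δ)) :
    f j ι * f j δ = f M ι * f M δ :=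
  mul_eq_mul_of_mul_eq_mul (Int.isUnit_mul_self (h.isUnit j (hjM.trans hM) δ))
    (Int.isUnit_mul_self (h.isUnit M hM ι))
    (h.constOn j M hjM hM δ hδ hεδ ι δ hι.1 hι.2 le_rfl (hι.1.trans_lt hι.2))

theorem lastBelow_mem (h : IsCoherentAbove o Θ ε C f)
    (hε' : ∀ η < Θ, ∃ c ∈ C η, ε < c ∧ c ≤ ε') {j ι : Ordinal} (hj : j < Θ) (hι : ε' ≤ ι)
    (hιo : ι < o) : lastBelow (C j) ι ∈ C j ∧ ε < lastBelow (C j) ι := by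
  obtain ⟨c, hc, hεc, hcε'⟩ := hε' j hj
  exact ⟨(h.isClub j hj).lastBelow_mem hc (hcε'.trans hι) hιo,
    hεc.trans_le (le_lastBelow hc (hcε'.trans hι))⟩

theorem antitoneOn_lastBelow (h : IsCoherentAbove o Θ ε C f)
    (hε' : ∀ η < Θ, ∃ c ∈ C η, ε < c ∧ c ≤ ε') {ι : Ordinal} (hι : ε' ≤ ι) (hιo : ι < o) :
    AntitoneOn (fun j => lastBelow (C j) ι) (Set.Iio Θ) := by
  intro ξ _ j hj hξj
  rcases hξj.eq_or_lt with rfl | hξj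
  · exact le_rfl
  obtain ⟨hmem, hεlt⟩ := h.lastBelow_mem hε' hj hι hιo
  exact le_lastBelow (h.mem_of_lt ξ j hξj hj _ hmem hεlt) (lastBelow_le _ _)

/-- Along `j < Θ` the last point of `C j` below `ι` eventually stabilises at some `δ`, after
which `f j ι * f j δ` no longer depends on `j`; `g ι` is this eventual value. -/
theorem exists_eventually_eq (h : IsCoherentAbove o Θ ε C f)
    (hε' : ∀ η < Θ, ∃ c ∈ C η, ε < c ∧ c ≤ ε') (hΘ : 0 < Θ) :
    ∃ g : Ordinal → ℤ, (∀ ι, IsUnit (g ι)) ∧ ∀ ι, ε' ≤ ι → ι < o →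
      ∃ m < Θ, ∀ M < Θ, m ≤ M → g ι = f M ι * f M (lastBelow (C M) ι) := by
  have hstab : ∀ ι, ∃ m < Θ, ε' ≤ ι → ι < o →
      ∀ j < Θ, m ≤ j → lastBelow (C j) ι = lastBelow (C m) ι := by
    intro ι
    by_cases hι : ε' ≤ ι ∧ ι < o
    · obtain ⟨m, hm, hconst⟩ :=
        (h.antitoneOn_lastBelow hε' hι.1 hι.2).exists_forall_ge_eq ⟨0, hΘ⟩
      exact ⟨m, hm, fun _ _ j hj hmj => hconst j hj hmj⟩
    · exact ⟨0, hΘ, fun h₁ h₂ => (hι ⟨h₁, h₂⟩).elim⟩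
  choose m hmΘ hm using hstab
  refine ⟨fun ι => f (m ι) ι * f (m ι) (lastBelow (C (m ι)) ι),
    fun ι => (h.isUnit _ (hmΘ ι) ι).mul (h.isUnit _ (hmΘ ι) _),
    fun ι hι hιo => ⟨m ι, hmΘ ι, fun M hM hmM => ?_⟩⟩
  dsimp only
  rcases hmM.eq_or_lt with hmM | hmM
  · rw [hmM]
  obtain ⟨hmem, hεlt⟩ := h.lastBelow_mem hε' (hmΘ ι) hι hιo
  rw [hm ι hι hιo M hM hmM.le]
  exact h.mul_eq_mul_of_mem_Ico hmM hM hmem hεlt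
    ⟨lastBelow_le _ _, (h.isClub _ (hmΘ ι)).lt_clubSucc_lastBelow hιo⟩

theorem exists_constOn (h : IsCoherentAbove o Θ ε C f)
    (hε' : ∀ η < Θ, ∃ c ∈ C η, ε < c ∧ c ≤ ε') (hΘ : Order.IsSuccLimit Θ) :
    ∃ g : Ordinal → ℤ, (∀ ι, IsUnit (g ι)) ∧ ∀ η < Θ, ∀ δ ∈ C η, ε' ≤ δ →
      ConstOn (fun ι => f η ι * g ι) δ (clubSucc (C η) δ) := by
  obtain ⟨g, hgunit, hg⟩ := h.exists_eventually_eq hε' hΘ.bot_lt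
  refine ⟨g, hgunit, fun η hη d hd hε'd ι ι' hι₁ hι₂ hι'₁ hι'₂ => ?_⟩
  have hso := (h.isClub η hη).clubSucc_lt ((h.isClub η hη).1 hd)
  obtain ⟨m, hm, hgm⟩ := hg ι (hε'd.trans hι₁) (hι₂.trans hso)
  obtain ⟨m', hm', hgm'⟩ := hg ι' (hε'd.trans hι'₁) (hι'₂.trans hso)
  set M := Order.succ (max η (max m m'))
  have hMΘ : M < Θ := hΘ.succ_lt (max_lt hη (max_lt hm hm'))
  have hηM : η < M := Order.lt_succ_iff.2 (le_max_left _ _)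
  have hmM : m ≤ M := (le_max_left _ _).trans ((le_max_right _ _).trans (Order.le_succ _))
  have hm'M : m' ≤ M := (le_max_right _ _).trans ((le_max_right _ _).trans (Order.le_succ _))
  obtain ⟨c, hc, hεc, hcε'⟩ := hε' M hMΘ
  have hsame : lastBelow (C M) ι = lastBelow (C M) ι' :=
    lastBelow_eq_of_mem_Ico (h.mem_of_lt η M hηM hMΘ) hc hεc (hcε'.trans hε'd)
      ⟨hι₁, hι₂⟩ ⟨hι'₁, hι'₂⟩
  have hconst := h.constOn η M hηM hMΘ d hd (hεc.trans_le (hcε'.trans hε'd))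
    ι ι' hι₁ hι₂ hι'₁ hι'₂
  simp only at hconst ⊢
  rw [hgm M hMΘ hmM, hgm' M hMΘ hm'M, ← hsame, ← mul_assoc, ← mul_assoc, hconst]

end IsCoherentAbove

theorem exists_isCoherentAbove {κ θ : Cardinal.{0}} (hreg : κ.IsRegular) (hθκ : θ < κ)
    {C : Ordinal → Set Ordinal} {f : Ordinal → Ordinal → ℤ}
    (hclub : ∀ η < θ.ord, IsClubOrd κ.ord (C η))
    (hval : ∀ η < θ.ord, ∀ ξ : Ordinal, f η ξ = 1 ∨ f η ξ = -1)
    (hdec : ∀ ξ η : Ordinal, ξ < η → η < θ.ord → AlmostSub κ (C η) (C ξ))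
    (hcoh : ∀ ξ η : Ordinal, ξ < η → η < θ.ord → ∃ ε < κ.ord, ∀ δ ∈ C ξ, ε ≤ δ →
      ConstOn (fun ι => f ξ ι * f η ι) δ (clubSucc (C ξ) δ)) :
    ∃ ε < κ.ord, IsCoherentAbove κ.ord θ.ord ε C f := by
  choose! E hEκ hE using hcoh
  have hbdd : ∀ ξ η, η < θ.ord → BddAbove (C η \ C ξ) := fun ξ η hη =>
    ⟨κ.ord, fun x hx => ((hclub η hη).1 hx.1).le⟩
  obtain ⟨ε, hεκ, hε⟩ := hreg.exists_lt_ord_forall_le₂ (α := θ.ord) (by rwa [Cardinal.card_ord])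
    (E := fun ξ η => max (E ξ η) (sSup (C η \ C ξ))) fun ξ η hξη hη =>
      max_lt (hEκ ξ η hξη hη)
        (hreg.sSup_lt_ord (hdec ξ η hξη hη) fun x hx => (hclub η hη).1 hx.1)
  refine ⟨ε, hεκ, hclub, fun η hη ι => Int.isUnit_iff.2 (hval η hη ι), ?_, ?_⟩
  · intro ξ η hξη hη x hx hεx
    by_contra hxξ
    exact hεx.not_ge ((le_csSup (hbdd ξ η hη) ⟨hx, hxξ⟩).trans
      ((le_max_right _ _).trans (hε ξ η hξη hη)))
  · exact fun ξ η hξη hη δ hδ hεδ =>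
      hE ξ η hξη hη δ hδ (((le_max_left _ _).trans (hε ξ η hξη hη)).trans hεδ.le)

theorem limit_stage_small_general (κ θ : Cardinal.{0}) (hreg : κ.IsRegular)
    (hθinf : Cardinal.aleph0 ≤ θ) (hθκ : θ < κ)
    (C : Ordinal → Set Ordinal) (f : Ordinal → Ordinal → ℤ)
    (hclub : ∀ η < θ.ord, IsClubOrd κ.ord (C η))
    (hval : ∀ η < θ.ord, ∀ ξ : Ordinal, f η ξ = 1 ∨ f η ξ = -1)
    (hdec : ∀ ξ η : Ordinal, ξ < η → η < θ.ord → AlmostSub κ (C η) (C ξ))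
    (hcoh : ∀ ξ η : Ordinal, ξ < η → η < θ.ord → ∃ ε < κ.ord, ∀ δ ∈ C ξ, ε ≤ δ →
      ConstOn (fun ι => f ξ ι * f η ι) δ (clubSucc (C ξ) δ)) :
    ∃ g : Ordinal → ℤ, (∀ ξ : Ordinal, g ξ = 1 ∨ g ξ = -1) ∧
      ∀ ξ < θ.ord, ∃ ε < κ.ord, ∀ δ ∈ C ξ, ε ≤ δ →
        ConstOn (fun ι => f ξ ι * g ι) δ (clubSucc (C ξ) δ) := by
  obtain ⟨ε, hεκ, hcoh'⟩ := exists_isCoherentAbove hreg hθκ hclub hval hdec hcoh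
  obtain ⟨ε', hε'κ, hε'⟩ := hreg.exists_lt_ord_forall_le (α := θ.ord)
    (by rwa [Cardinal.card_ord]) fun η hη => (hclub η hη).clubSucc_lt hεκ
  obtain ⟨g, hgunit, hg⟩ := hcoh'.exists_constOn
    (fun η hη => ⟨clubSucc (C η) ε, (hclub η hη).clubSucc_mem hεκ,
      (hclub η hη).lt_clubSucc hεκ, hε' η hη⟩)
    (Cardinal.isSuccLimit_ord hθinf)
  exact ⟨g, fun ι => Int.isUnit_iff.1 (hgunit ι), fun ξ hξ => ⟨ε', hε'κ, hg ξ hξ⟩⟩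

/-- **Lemma (limit stage, small cofinality).** Let κ be regular uncountable and θ an
infinite cardinal with θ < κ.  Given clubs `C_η` (η < θ) in κ that ⊆*-decrease, and
functions `f_η : κ → {−1,+1}` that pairwise eventually agree up to a constant on the
intervals of the corresponding clubs, there is a single `f : κ → {−1,+1}` such that for
each η < θ, `f_η ⬝ f` is eventually constant on the intervals of `C_η`. -/
theorem limit_stage_small (κ θ : Cardinal.{0}) (hreg : κ.IsRegular)
    (hunc : Cardinal.aleph0 < κ)
    (hθinf : Cardinal.aleph0 ≤ θ) (hθκ : θ < κ)
    (C : Ordinal → Set Ordinal) (f : Ordinal → Ordinal → ℤ)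
    (hclub : ∀ η < θ.ord, IsClubOrd κ.ord (C η))
    (hval : ∀ η < θ.ord, ∀ ξ : Ordinal, f η ξ = 1 ∨ f η ξ = -1)
    (hdec : ∀ ξ η : Ordinal, ξ < η → η < θ.ord → AlmostSub κ (C η) (C ξ))
    (hcoh : ∀ ξ η : Ordinal, ξ < η → η < θ.ord → ∃ ε < κ.ord, ∀ δ ∈ C ξ, ε ≤ δ →
      ConstOn (fun ι => f ξ ι * f η ι) δ (clubSucc (C ξ) δ)) :
    ∃ g : Ordinal → ℤ, (∀ ξ : Ordinal, g ξ = 1 ∨ g ξ = -1) ∧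
      ∀ ξ < θ.ord, ∃ ε < κ.ord, ∀ δ ∈ C ξ, ε ≤ δ →
        ConstOn (fun ι => f ξ ι * g ι) δ (clubSucc (C ξ) δ) :=
  limit_stage_small_general κ θ hreg hθinf hθκ C f hclub hval hdec hcoh
end
end

section
/- Let κ be a regular uncountable cardinal. Suppose (C_η)_{η<κ} are clubs in κ and (f_η)_{η<κ} are functions κ → {−1, +1} such that: (a) for all ξ < η < κ, C_η ⊆* C_ξ; and (b) for all ξ < η < κ there exists ε < κ such that for every δ ∈ C_ξ with δ ≥ ε, the product function f_ξ · f_η is constant on the interval [δ, succ_{C_ξ}(δ)). Then there exists a function f : κ → {−1, +1} such that for every ξ < κ there exists ε < κ such that for every δ ∈ C_ξ with δ ≥ ε, the function f_ξ · f is constant on the interval [δ, succ_{C_ξ}(δ)). -/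
noncomputable section

/-! Let `ε ξ η` witness the coherence of `f ξ` and `f η`, and let `E` be the set of ordinals `e`
lying in every `C j` with `j < e` and bounding every `ε ξ η` with `ξ < η < e`; since `κ` is regular
and uncountable, `E` is unbounded in `κ`. For `ι < κ` let `β ι = sup (E ∩ [0, ι])` and let `g ι` be
the limit of `f η ι` along an ultrafilter on `β ι` containing all its final segments.
Given `ξ`, take `δ ∈ C ξ` above some point of `E` above `ξ`. A point of `E` in
`(δ, succ_{C ξ} δ)` would lie in `C ξ`, so `β` is constant on `[δ, succ_{C ξ} δ)`, and for
`ξ < η < β` we have `ε ξ η ≤ δ`, so `f ξ * f η` is constant there. Passing to the ultrafilter limit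
in `η` shows that `f ξ * g` is constant there as well. -/

open Set Filter Ordinal Cardinal

universe u

theorem exists_ultrafilter_Ico_mem {α : Type*} [LinearOrder α] (b : α) :
    ∃ U : Ultrafilter α, ∀ a < b, Ico a b ∈ U := by
  rcases isEmpty_or_nonempty (Iio b) with h | h
  · exact ⟨pure b, fun a hab => (h.false ⟨a, hab⟩).elim⟩
  · refine ⟨(Ultrafilter.of (atTop : Filter (Iio b))).map (↑), fun a hab => ?_⟩
    have hIci : Ici (⟨a, hab⟩ : Iio b) ⊆ (↑) ⁻¹' Ico a b := fun x hx => ⟨hx, x.2⟩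
    exact Ultrafilter.of_le _ (mem_of_superset (Ici_mem_atTop _) hIci)

open scoped Classical in
def ultraSign {α : Type*} (U : Ultrafilter α) (u : α → ℤ) : ℤ :=
  if ∀ᶠ i in U, u i = 1 then 1 else -1

section ultraSign

variable {α : Type*} {U : Ultrafilter α} {u v : α → ℤ}

theorem ultraSign_eq_one_or (U : Ultrafilter α) (u : α → ℤ) :
    ultraSign U u = 1 ∨ ultraSign U u = -1 := by
  unfold ultraSign
  split_ifs <;> simp

theorem eventually_eq_ultraSign (hu : ∀ᶠ i in U, u i = 1 ∨ u i = -1) :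
    ∀ᶠ i in U, u i = ultraSign U u := by
  unfold ultraSign
  split_ifs with h
  · exact h
  · filter_upwards [hu, Ultrafilter.eventually_not.2 h] with i hi hi'
    exact hi.resolve_left hi'

theorem mul_ultraSign_eq_mul_ultraSign (hu : ∀ᶠ i in U, u i = 1 ∨ u i = -1)
    (hv : ∀ᶠ i in U, v i = 1 ∨ v i = -1) {a b : ℤ} (h : ∀ᶠ i in U, a * u i = b * v i) :
    a * ultraSign U u = b * ultraSign U v := by
  obtain ⟨i, hi, hui, hvi⟩ :=
    (h.and ((eventually_eq_ultraSign hu).and (eventually_eq_ultraSign hv))).exists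
  rwa [← hui, ← hvi]

end ultraSign

theorem clubSucc_le_s14 {C : Set Ordinal} {δ e : Ordinal} (he : e ∈ C) (hδe : δ < e) :
    clubSucc C δ ≤ e :=
  csInf_le' ⟨he, hδe⟩

theorem inter_Iic_eq_of_lt_clubSucc {C E : Set Ordinal} {δ x : Ordinal}
    (hEC : ∀ e ∈ E, δ < e → e ∈ C) (hδx : δ ≤ x) (hx : x < clubSucc C δ) :
    E ∩ Iic x = E ∩ Iic δ := by
  refine Subset.antisymm (fun e ⟨he, hex⟩ => ⟨he, mem_Iic.2 (not_lt.1 fun hδe => ?_)⟩)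
    (inter_subset_inter_right _ (Iic_subset_Iic.2 hδx))
  exact (hx.trans_le (clubSucc_le_s14 (hEC e he hδe) hδe)).not_ge hex

namespace IsClubIn

variable {o : Ordinal} {C : Set Ordinal}

theorem clubSucc_spec_s14 (hC : IsClubIn o C) {δ : Ordinal} (hδ : δ < o) :
    clubSucc C δ ∈ C ∧ δ < clubSucc C δ :=
  csInf_mem (hC.2.2 δ hδ)

theorem mem_of_forall_inter_Ioo_nonempty (hC : IsClubIn o C) {e : Ordinal} (heo : e < o)
    (he : e ≠ 0) (hacc : ∀ x < e, (C ∩ Ioo x e).Nonempty) : e ∈ C := by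
  have hne : (C ∩ Iio e).Nonempty := by
    obtain ⟨c, hc, -, hce⟩ := hacc 0 (pos_iff_ne_zero.2 he)
    exact ⟨c, hc, hce⟩
  have hsup : sSup (C ∩ Iio e) = e := by
    refine le_antisymm (csSup_le hne fun c hc => hc.2.le) (not_lt.1 fun hlt => ?_)
    obtain ⟨c, hc, hlt', hce⟩ := hacc _ hlt
    exact hlt'.not_ge (le_csSup ⟨e, fun c hc => hc.2.le⟩ ⟨hc, hce⟩)
  have hmem := hC.2.1 _ inter_subset_left hne (hsup.symm ▸ heo)
  rwa [hsup] at hmem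

end IsClubIn

def diagonalPoints (C : Ordinal → Set Ordinal) (ε : Ordinal → Ordinal → Ordinal) :
    Set Ordinal :=
  {e | (∀ j < e, e ∈ C j) ∧ ∀ ξ η, ξ < η → η < e → ε ξ η < e}

theorem apply_lt_of_lt_sSup_diagonalPoints_inter_Iic {C : Ordinal → Set Ordinal}
    {ε : Ordinal → Ordinal → Ordinal} {δ ξ η : Ordinal}
    (hne : (diagonalPoints C ε ∩ Iic δ).Nonempty) (hξη : ξ < η)
    (hη : η < sSup (diagonalPoints C ε ∩ Iic δ)) : ε ξ η < δ := by
  obtain ⟨e, ⟨he, heδ⟩, hηe⟩ := exists_lt_of_lt_csSup hne hη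
  exact (he.2 ξ η hξη hηe).trans_le heδ

namespace Cardinal.IsRegular

variable {κ : Cardinal.{u}}

theorem iSup_Iio_lt_ord (hκ : κ.IsRegular) {a : Ordinal.{u}} (ha : a < κ.ord)
    {F : Ordinal.{u} → Ordinal.{u}} (hF : ∀ x < a, F x < κ.ord) : ⨆ x : Iio a, F x < κ.ord := by
  refine Ordinal.lift_iSup_lt_of_lt_cof (f := fun x : Iio a => F x) ?_ fun x => hF x x.2
  rwa [← lift_cof, hκ.cof_ord, mk_Iio_ordinal, lift_lift, lift_lt, ← lt_ord]

theorem exists_closure_point (hκ : κ.IsRegular) (hunc : ℵ₀ < κ)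
    (N : Ordinal.{u} → Ordinal.{u}) (hN : ∀ x < κ.ord, N x < κ.ord) {a : Ordinal} (ha : a < κ.ord) :
    ∃ e, a < e ∧ e < κ.ord ∧ ∀ x < e, N x < e := by
  have hlim := isSuccLimit_ord hκ.aleph0_le
  set M : Ordinal → Ordinal := fun y => ⨆ x : Iio (y + 1), (N x + 1)
  have hNM : ∀ {x y}, x ≤ y → N x < M y := fun {x y} hxy =>
    (Order.lt_add_one_iff.2 le_rfl).trans_le
      (Ordinal.le_iSup (fun x : Iio (y + 1) => N x + 1) ⟨x, Order.lt_add_one_iff.2 hxy⟩)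
  have hM_lt : ∀ y < κ.ord, M y < κ.ord := fun y hy =>
    hκ.iSup_Iio_lt_ord (hlim.add_one_lt hy) fun x hx =>
      hlim.add_one_lt (hN x ((Order.lt_add_one_iff.1 hx).trans_lt hy))
  refine ⟨nfp M (a + 1), (Order.lt_add_one_iff.2 le_rfl).trans_le (le_nfp M _),
    nfp_lt_ord (by rwa [hκ.cof_ord]) hM_lt (hlim.add_one_lt ha), fun x hx => ?_⟩
  obtain ⟨n, hxn⟩ := lt_nfp_iff.1 hx
  calc N x < M (M^[n] (a + 1)) := hNM hxn.le
    _ = M^[n + 1] (a + 1) := (Function.iterate_succ_apply' M n _).symm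
    _ ≤ nfp M (a + 1) := iterate_le_nfp M _ _

theorem exists_mem_diagonalPoints {κ : Cardinal.{0}} (hκ : κ.IsRegular) (hunc : ℵ₀ < κ)
    {C : Ordinal → Set Ordinal} (hC : ∀ j < κ.ord, IsClubIn κ.ord (C j))
    {ε : Ordinal → Ordinal → Ordinal} (hε : ∀ ξ η, ξ < η → η < κ.ord → ε ξ η < κ.ord)
    {a : Ordinal} (ha : a < κ.ord) : ∃ e ∈ diagonalPoints C ε, a < e ∧ e < κ.ord := by
  have hlim := isSuccLimit_ord hκ.aleph0_le
  set N : Ordinal → Ordinal := fun x =>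
    max (⨆ j : Iio (x + 1), clubSucc (C j) x) (⨆ ξ : Iio x, ε ξ x)
  have hN : ∀ x < κ.ord, N x < κ.ord := fun x hx => by
    have hsucc : ∀ j < x + 1, clubSucc (C j) x < κ.ord := fun j hj => by
      have hjκ := (Order.lt_add_one_iff.1 hj).trans_lt hx
      exact (hC j hjκ).1 ((hC j hjκ).clubSucc_spec_s14 hx).1
    exact max_lt (hκ.iSup_Iio_lt_ord (hlim.add_one_lt hx) hsucc)
      (hκ.iSup_Iio_lt_ord hx fun ξ hξ => hε ξ x hξ hx)
  obtain ⟨e, hae, heκ, hNe⟩ := hκ.exists_closure_point hunc N hN ha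
  refine ⟨e, ⟨fun j hj => ?_, fun ξ η hξη hηe => ?_⟩, hae, heκ⟩
  · refine (hC j (hj.trans heκ)).mem_of_forall_inter_Ioo_nonempty heκ (pos_of_gt hj).ne'
      fun x hx => ?_
    have hy : max x j < e := max_lt hx hj
    obtain ⟨hc, hyc⟩ := (hC j (hj.trans heκ)).clubSucc_spec_s14 (hy.trans heκ)
    refine ⟨_, hc, (le_max_left x j).trans_lt hyc, lt_of_le_of_lt ?_ (hNe _ hy)⟩
    exact (Ordinal.le_iSup (fun j' : Iio (max x j + 1) => clubSucc (C j') (max x j))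
      ⟨j, Order.lt_add_one_iff.2 (le_max_right x j)⟩).trans (le_max_left _ _)
  · exact ((Ordinal.le_iSup (fun ξ' : Iio η => ε ξ' η) ⟨ξ, hξη⟩).trans
      (le_max_right _ _)).trans_lt (hNe η hηe)

end Cardinal.IsRegular

theorem limit_stage_kappa_general (κ : Cardinal.{0}) (hreg : κ.IsRegular)
    (hunc : Cardinal.aleph0 < κ)
    (C : Ordinal → Set Ordinal) (f : Ordinal → Ordinal → ℤ)
    (hclub : ∀ η < κ.ord, IsClubIn κ.ord (C η))
    (hval : ∀ η < κ.ord, ∀ ξ : Ordinal, f η ξ = 1 ∨ f η ξ = -1)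
    (hcoh : ∀ ξ η : Ordinal, ξ < η → η < κ.ord → ∃ ε < κ.ord, ∀ δ ∈ C ξ, ε ≤ δ →
      ConstOn (fun ι => f ξ ι * f η ι) δ (clubSucc (C ξ) δ)) :
    ∃ g : Ordinal → ℤ, (∀ ξ : Ordinal, g ξ = 1 ∨ g ξ = -1) ∧
      ∀ ξ < κ.ord, ∃ ε < κ.ord, ∀ δ ∈ C ξ, ε ≤ δ →
        ConstOn (fun ι => f ξ ι * g ι) δ (clubSucc (C ξ) δ) := by
  choose! ε hεκ hε using hcoh
  set E := diagonalPoints C ε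
  choose U hU using fun β : Ordinal => exists_ultrafilter_Ico_mem β
  refine ⟨fun ι => ultraSign (U (sSup (E ∩ Iic ι))) (f · ι), fun ι => ultraSign_eq_one_or _ _,
    fun ξ hξ => ?_⟩
  obtain ⟨e₁, he₁, hξe₁, he₁κ⟩ := hreg.exists_mem_diagonalPoints hunc hclub hεκ hξ
  refine ⟨e₁, he₁κ, fun δ hδ he₁δ α α' hα hαs hα' hα's => ?_⟩
  have hEC : ∀ e ∈ E, δ < e → e ∈ C ξ := fun e he hδe =>
    he.1 ξ (hξe₁.trans_le (he₁δ.trans hδe.le))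
  have hne : (E ∩ Iic δ).Nonempty := ⟨e₁, he₁, he₁δ⟩
  set β := sSup (E ∩ Iic δ)
  have hξβ : ξ < β := hξe₁.trans_le (le_csSup ⟨δ, fun _ h => h.2⟩ ⟨he₁, he₁δ⟩)
  have hηκ : ∀ η < β, η < κ.ord := fun η hη =>
    (hη.trans_le (csSup_le hne fun _ h => h.2)).trans ((hclub ξ hξ).1 hδ)
  show f ξ α * ultraSign _ _ = f ξ α' * ultraSign _ _
  rw [inter_Iic_eq_of_lt_clubSucc hEC hα hαs, inter_Iic_eq_of_lt_clubSucc hEC hα' hα's]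
  refine mul_ultraSign_eq_mul_ultraSign ?_ ?_ ?_ <;>
    filter_upwards [hU β ξ hξβ] with η ⟨hξη, hηβ⟩
  · exact hval η (hηκ η hηβ) α
  · exact hval η (hηκ η hηβ) α'
  rcases hξη.eq_or_lt with rfl | hlt
  · rcases hval ξ hξ α with h | h <;> rcases hval ξ hξ α' with h' | h' <;> simp [h, h']
  · exact hε ξ η hlt (hηκ η hηβ) δ hδ
      (apply_lt_of_lt_sSup_diagonalPoints_inter_Iic hne hlt hηβ).le α α' hα hαs hα' hα's

/-- **Lemma (limit stage, cofinality κ).** Let κ be regular uncountable.  Given clubs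
`C_η` (η < κ) in κ that ⊆*-decrease, and functions `f_η : κ → {−1,+1}` that pairwise
eventually agree up to a constant on the intervals of the corresponding clubs, there is a
single `f : κ → {−1,+1}` such that for each η < κ, `f_η ⬝ f` is eventually constant on
the intervals of `C_η`. -/
theorem limit_stage_kappa (κ : Cardinal.{0}) (hreg : κ.IsRegular)
    (hunc : Cardinal.aleph0 < κ)
    (C : Ordinal → Set Ordinal) (f : Ordinal → Ordinal → ℤ)
    (hclub : ∀ η < κ.ord, IsClubIn κ.ord (C η))
    (hval : ∀ η < κ.ord, ∀ ξ : Ordinal, f η ξ = 1 ∨ f η ξ = -1)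
    (hdec : ∀ ξ η : Ordinal, ξ < η → η < κ.ord → AlmostSub κ (C η) (C ξ))
    (hcoh : ∀ ξ η : Ordinal, ξ < η → η < κ.ord → ∃ ε < κ.ord, ∀ δ ∈ C ξ, ε ≤ δ →
      ConstOn (fun ι => f ξ ι * f η ι) δ (clubSucc (C ξ) δ)) :
    ∃ g : Ordinal → ℤ, (∀ ξ : Ordinal, g ξ = 1 ∨ g ξ = -1) ∧
      ∀ ξ < κ.ord, ∃ ε < κ.ord, ∀ δ ∈ C ξ, ε ≤ δ →
        ConstOn (fun ι => f ξ ι * g ι) δ (clubSucc (C ξ) δ) :=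
  limit_stage_kappa_general κ hreg hunc C f hclub hval hcoh
end
end

section
/- Let H be a Hilbert space, let L be a closed subspace of H whose Hilbert space dimension equals that of H, let P ∈ B(H) be the orthogonal projection onto L, and let π : B(H) → B(H)/K(H) be the quotient map onto the Calkin algebra. Let Φ be a *-automorphism of B(H)/K(H). Suppose there exists v ∈ B(H)/K(H) with v* v = π(P) and v v* = Φ(π(P)) such that Φ(y) = v y v* for every y in the corner π(P)·(B(H)/K(H))·π(P). Then Φ is inner, i.e., there exists a unitary w ∈ B(H)/K(H) with Φ(x) = w x w* for all x ∈ B(H)/K(H). -/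
noncomputable section

variable (H : Type) [NormedAddCommGroup H] [InnerProductSpace ℂ H] [CompleteSpace H]

/-- The Calkin algebra B(H)/K(H): the quotient of the bounded operators by the
(equivalence) relation "the difference is a compact operator". -/
def Calkin : Type :=
  Quot (fun x y : H →L[ℂ] H => IsCompactOperator ⇑(x - y))

/-- The quotient map π : B(H) → B(H)/K(H). -/
def cmk (x : H →L[ℂ] H) : Calkin H := Quot.mk _ x

/-- `Φ` is a *-automorphism of the Calkin algebra: it is bijective and respects, on
representatives, addition, multiplication, the complex scalar multiplication and the
adjoint operation. -/
def IsCalkinAut (Φ : Calkin H → Calkin H) : Prop :=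
  Function.Bijective Φ ∧
  (∀ a b a' b' : H →L[ℂ] H, Φ (cmk H a) = cmk H a' → Φ (cmk H b) = cmk H b' →
      Φ (cmk H (a + b)) = cmk H (a' + b') ∧ Φ (cmk H (a * b)) = cmk H (a' * b')) ∧
  (∀ (c : ℂ) (a a' : H →L[ℂ] H), Φ (cmk H a) = cmk H a' →
      Φ (cmk H (c • a)) = cmk H (c • a')) ∧
  (∀ a a' : H →L[ℂ] H, Φ (cmk H a) = cmk H a' → Φ (cmk H (star a)) = cmk H (star a'))


/-!
Transport the corner back to all of `B(H)`: since `L` and `H` have the same Hilbert dimension,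
there is an isometry `S` with `S S* = P`. If `Φ(π S) = π u`, then `π (u* u) = Φ(1) = 1` and
`π (u u*) = Φ(π P) = π (v v*)`, which makes `w = u* v S` unitary modulo compacts; it implements
`Φ` because every `x` equals `S* (S x S*) S` with `S x S*` in the corner.
-/

section CompactCon

variable (𝕜 E : Type*) [NontriviallyNormedField 𝕜] [NormedAddCommGroup E] [NormedSpace 𝕜 E]

def compactCon : RingCon (E →L[𝕜] E) where
  r a b := IsCompactOperator ⇑(a - b)
  iseqv :=
    { refl a := by simpa using isCompactOperator_zero
      symm {a b} h := by simpa using h.neg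
      trans {a b c} h₁ h₂ := by simpa using h₁.add h₂ }
  add' {a b c d} h₁ h₂ := by simpa [add_sub_add_comm] using h₁.add h₂
  mul' {a b c d} h₁ h₂ := by
    have e : a * c - b * d = (a - b) * c + b * (c - d) := by noncomm_ring
    rw [e]
    exact (h₁.comp_clm c).add (h₂.clm_comp b)

variable {𝕜 E}

theorem compactCon_eq_iff {a b : E →L[𝕜] E} :
    (a : (compactCon 𝕜 E).Quotient) = b ↔ IsCompactOperator ⇑(a - b) :=
  RingCon.eq _

end CompactCon

section CalkinEquiv

variable {E : Type} [NormedAddCommGroup E] [InnerProductSpace ℂ E]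

def Calkin.equivQuotient : Calkin E ≃ (compactCon ℂ E).Quotient :=
  Quot.congr (Equiv.refl _) fun _ _ => Iff.rfl

end CalkinEquiv

namespace IsCalkinAut

variable {H} {Φ : Calkin H → Calkin H}

theorem map_cmk_one (hΦ : IsCalkinAut H Φ) : Φ (cmk H 1) = cmk H 1 := by
  obtain ⟨e, he⟩ := Quot.exists_rep (Φ (cmk H 1))
  obtain ⟨z, hz⟩ := hΦ.1.2 (cmk H 1)
  obtain ⟨a, rfl⟩ := Quot.exists_rep z
  have hae := (hΦ.2.1 1 a e 1 he.symm hz).2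
  rw [one_mul, mul_one] at hae
  exact he.symm.trans (hae.symm.trans hz)

def toMonoidHom (hΦ : IsCalkinAut H Φ) : (H →L[ℂ] H) →* (compactCon ℂ H).Quotient where
  toFun a := Calkin.equivQuotient (Φ (cmk H a))
  map_one' := by rw [hΦ.map_cmk_one]; rfl
  map_mul' a b := by
    obtain ⟨a', ha'⟩ := Quot.exists_rep (Φ (cmk H a))
    obtain ⟨b', hb'⟩ := Quot.exists_rep (Φ (cmk H b))
    rw [← ha', ← hb', (hΦ.2.1 a b a' b' ha'.symm hb'.symm).2]
    rfl

theorem toMonoidHom_eq_iff (hΦ : IsCalkinAut H Φ) {a b : H →L[ℂ] H} :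
    hΦ.toMonoidHom a = b ↔ Φ (cmk H a) = cmk H b :=
  Calkin.equivQuotient.apply_eq_iff_eq (y := cmk H b)

theorem toMonoidHom_star (hΦ : IsCalkinAut H Φ) {a a' : H →L[ℂ] H}
    (h : hΦ.toMonoidHom a = a') : hΦ.toMonoidHom (star a) = (star a' : H →L[ℂ] H) :=
  hΦ.toMonoidHom_eq_iff.mpr (hΦ.2.2.2 a a' (hΦ.toMonoidHom_eq_iff.mp h))

end IsCalkinAut

namespace ContinuousLinearMap

variable {𝕜 E : Type*} [RCLike 𝕜] [NormedAddCommGroup E] [InnerProductSpace 𝕜 E]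
  [CompleteSpace E]

theorem mul_star_eq_of_range_eq {S P : E →L[𝕜] E} {L : Submodule 𝕜 E}
    (hS : star S * S = 1) (hL : S.range = L) (hP : ∀ x, P x ∈ L ∧ x - P x ∈ Lᗮ) :
    S * star S = P := by
  have hS' (y : E) : star S (S y) = y := congr($hS y)
  ext x
  have hSL : S (star S x) ∈ L := hL ▸ LinearMap.mem_range_self (S : E →ₗ[𝕜] E) _
  have hSLperp : x - S (star S x) ∈ Lᗮ := by
    rw [← hL, orthogonal_range, LinearMap.mem_ker]
    simp only [coe_coe, map_sub, ← star_eq_adjoint, hS', sub_self]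
  have hdiff : P x - S (star S x) = 0 :=
    Submodule.disjoint_def.mp L.orthogonal_disjoint _ (L.sub_mem (hP x).1 hSL)
      (by simpa only [sub_sub_sub_cancel_left] using
        Lᗮ.sub_mem hSLperp (hP x).2)
  exact (sub_eq_zero.mp hdiff).symm

theorem exists_star_mul_self_eq_one_and_range_eq {L : Submodule 𝕜 E} (e : E ≃ₗᵢ[𝕜] L) :
    ∃ S : E →L[𝕜] E, star S * S = 1 ∧ S.range = L := by
  refine ⟨L.subtypeL ∘L (e : E →L[𝕜] L), ?_, ?_⟩
  · rw [star_eq_adjoint, mul_def, ← norm_map_iff_adjoint_comp_self]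
    exact fun x => e.norm_map x
  · ext y
    simp

end ContinuousLinearMap

-- Only the multiplicative structure matters: `π` stands for the quotient map and `φ` for `Φ ∘ π`.
theorem exists_conj_of_conj_on_corner {R Q : Type*} [Monoid R] [StarMul R] [Monoid Q]
    (π φ : R →* Q) {S P u v : R} (hS : star S * S = 1) (hP : S * star S = P)
    (hu : φ S = π u) (hu' : φ (star S) = π (star u))
    (hv : π (star v * v) = π P) (hvP : φ P = π (v * star v))
    (hcorner : ∀ y, P * y * P = y → φ y = π (v * y * star v)) :
    ∃ w, π (star w * w) = 1 ∧ π (w * star w) = 1 ∧ ∀ x, φ x = π (w * x * star w) := by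
  have hS' (z : R) : star S * (S * z) = z := by rw [← mul_assoc, hS, one_mul]
  have huu : π (star u) * π u = 1 := by rw [← hu, ← hu', ← map_mul, hS, map_one]
  have huv : π (u * star u) = π (v * star v) := by
    rw [map_mul, ← hu, ← hu', ← map_mul, hP, hvP]
  refine ⟨star u * v * S, ?_, ?_, fun x => ?_⟩
  · calc π (star (star u * v * S) * (star u * v * S))
        = π (star S) * π (star v) * π (u * star u) * π v * π S := by
          simp only [star_mul, star_star, map_mul, mul_assoc]
      _ = π (star S) * π (star v * v) * π (star v * v) * π S := by
          rw [huv]; simp only [map_mul, mul_assoc]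
      _ = π (star S * S * star S * S * star S * S) := by
          rw [hv, ← hP]; simp only [map_mul, mul_assoc]
      _ = 1 := by simp only [hS, one_mul, map_one]
  · calc π (star u * v * S * star (star u * v * S))
        = π (star u) * π v * π (S * star S) * π (star v) * π u := by
          simp only [star_mul, star_star, map_mul, mul_assoc]
      _ = π (star u) * π (v * star v) * π (v * star v) * π u := by
          rw [hP, ← hv]; simp only [map_mul, mul_assoc]
      _ = π (star u * u * star u * u * star u * u) := by
          rw [← huv]; simp only [map_mul, mul_assoc]
      _ = 1 := by simp only [map_mul, huu, one_mul]
  · have hy : P * (S * x * star S) * P = S * x * star S := by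
      simp only [← hP, mul_assoc, hS']
    calc φ x = φ (star S) * φ (S * x * star S) * φ S := by
          simp only [← map_mul, mul_assoc, hS', hS, mul_one]
      _ = π (star u * v * S * x * star (star u * v * S)) := by
          rw [hu, hu', hcorner _ hy]; simp only [star_mul, star_star, map_mul, mul_assoc]

theorem inner_of_inner_on_corner
    (L : Submodule ℂ H)
    (hdim : ∃ (ι : Type) (_ : HilbertBasis ι ℂ L) (_ : HilbertBasis ι ℂ H), True)
    (P : H →L[ℂ] H) (hP : ∀ w : H, P w ∈ L ∧ w - P w ∈ Lᗮ)
    (Φ : Calkin H → Calkin H) (hΦ : IsCalkinAut H Φ)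
    (hcorner : ∃ v : H →L[ℂ] H,
      IsCompactOperator ⇑(star v * v - P) ∧
      Φ (cmk H P) = cmk H (v * star v) ∧
      (∀ y : H →L[ℂ] H, IsCompactOperator ⇑(P * y * P - y) →
        Φ (cmk H y) = cmk H (v * y * star v))) :
    ∃ w : H →L[ℂ] H, IsCompactOperator ⇑(star w * w - 1) ∧
      IsCompactOperator ⇑(w * star w - 1) ∧
      ∀ x : H →L[ℂ] H, Φ (cmk H x) = cmk H (w * x * star w) := by
  obtain ⟨ι, bL, bH, -⟩ := hdim
  obtain ⟨S, hS, hSL⟩ :=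
    ContinuousLinearMap.exists_star_mul_self_eq_one_and_range_eq (bH.repr.trans bL.repr.symm)
  obtain ⟨v, hv, hvP, hvcorner⟩ := hcorner
  obtain ⟨u, hu⟩ := (compactCon ℂ H).mk'_surjective (hΦ.toMonoidHom S)
  obtain ⟨w, hw, hw', hΦw⟩ := exists_conj_of_conj_on_corner (compactCon ℂ H).mk' hΦ.toMonoidHom
    hS (ContinuousLinearMap.mul_star_eq_of_range_eq hS hSL hP) hu.symm
    (hΦ.toMonoidHom_star hu.symm) (compactCon_eq_iff.mpr hv) (hΦ.toMonoidHom_eq_iff.mpr hvP)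
    fun y hy => hΦ.toMonoidHom_eq_iff.mpr
      (hvcorner y (by simpa [hy] using isCompactOperator_zero))
  exact ⟨w, compactCon_eq_iff.mp hw, compactCon_eq_iff.mp hw',
    fun x => hΦ.toMonoidHom_eq_iff.mp (hΦw x)⟩

end
end

section
/- There exists a sequence (f_α)_{α<ω₁} such that each f_α : α → ω is an injection and for all α < β < ω₁ the set { ξ < α : f_β(ξ) ≠ f_α(ξ) } is finite. -/
/-!
The functions are built by transfinite recursion, keeping the extra invariant that each `f_β`
omits infinitely many values. At a successor `γ + 1`, send `γ` to an omitted value. At a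
countable limit `β`, pick a cofinal sequence `α₀ ≤ α₁ ≤ ⋯` and build injections
`h_n : α_n → ω` with `h_n =* f_{α_n}` and `h_{n+1}` extending `h_n`: glue `h_n` with
`f_{α_{n+1}}` and redefine the latter at the finitely many points of `[α_n, α_{n+1})` whose
values collide with those of `h_n`. Each step also reserves one new value that no later `h_m`
may take; the union of the `h_n` is then injective, coherent, and omits all reserved values.
-/

open Set Filter Function

section

variable {ι X : Type*}

theorem WellFoundedLT.exists_forall_of_extend [Preorder ι] [WellFoundedLT ι] [Nonempty X]
    (P : (ι → X) → ι → X → Prop)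
    (congr : ∀ f f' i x, (∀ j < i, f j = f' j) → P f i x → P f' i x)
    (extend : ∀ f i, (∀ j < i, P f j (f j)) → ∃ x, P f i x) :
    ∃ f : ι → X, ∀ i, P f i (f i) := by
  classical
  choose! pick hpick using extend
  let F (i : ι) (f : ∀ j, j < i → X) : X :=
    pick (fun j => if hj : j < i then f j hj else Classical.arbitrary X) i
  refine ⟨wellFounded_lt.fix F, fun i => ?_⟩
  induction i using WellFoundedLT.induction with
  | ind i ih =>
    set f := wellFounded_lt.fix F
    let fi (j : ι) : X := if j < i then f j else Classical.arbitrary X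
    have hfi : ∀ j < i, fi j = f j := fun j hj => if_pos hj
    have hfix : f i = pick fi i := wellFounded_lt.fix_eq F i
    rw [hfix]
    refine congr fi f i _ hfi (hpick fi i fun j hj => ?_)
    rw [hfi j hj]
    exact congr f fi j _ (fun k hk => (hfi k (hk.trans hj)).symm) (ih j hj)

theorem eventuallyEq_cofinite_inf_principal_iff {s : Set ι} {g h : ι → X} :
    g =ᶠ[cofinite ⊓ 𝓟 s] h ↔ {x | x ∈ s ∧ g x ≠ h x}.Finite := by
  simp only [EventuallyEq, Filter.Eventually, mem_inf_principal, mem_cofinite, compl_ofPred,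
    Classical.not_imp, mem_ofPred_eq]

theorem Filter.EventuallyEq.infinite_compl_image {s : Set ι} {g h : ι → X}
    (hgh : g =ᶠ[cofinite ⊓ 𝓟 s] h) (hg : (g '' s)ᶜ.Infinite) : (h '' s)ᶜ.Infinite := by
  refine (hg.sdiff ((eventuallyEq_cofinite_inf_principal_iff.1 hgh).image h)).mono ?_
  rintro y ⟨hy, hyD⟩ ⟨x, hx, rfl⟩
  by_cases hgx : g x = h x
  · exact hy ⟨x, hx, hgx⟩
  · exact hyD ⟨x, ⟨hx, hgx⟩, rfl⟩

theorem exists_injOn_of_injOn_sdiff_finite {s b : Set ι} {t : Set X} {u : ι → X}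
    (hb : b.Finite) (ht : tᶜ.Infinite) (hu : InjOn u (s \ b)) (hut : MapsTo u (s \ b) t) :
    ∃ v : ι → X, InjOn v s ∧ EqOn v u bᶜ ∧ MapsTo v b tᶜ := by
  classical
  have : Nonempty X := ⟨ht.nonempty.some⟩
  obtain ⟨w, hwt, hw⟩ := hb.exists_injOn_of_encard_le (t := tᶜ) (by simp [ht.encard_eq])
  refine ⟨b.piecewise w u, ?_, fun x hx => piecewise_eq_of_notMem _ _ _ hx,
    fun x hx => by simpa [hx] using hwt hx⟩
  rw [← inter_union_sdiff s b, injOn_union disjoint_sdiff_inter.symm]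
  refine ⟨(hw.mono inter_subset_right).congr fun x hx => (piecewise_eq_of_mem _ _ _ hx.2).symm,
    hu.congr fun x hx => (piecewise_eq_of_notMem _ _ _ hx.2).symm, ?_⟩
  rintro x ⟨-, hxb⟩ y ⟨hys, hyb⟩ hxy
  rw [piecewise_eq_of_mem _ _ _ hxb, piecewise_eq_of_notMem _ _ _ hyb] at hxy
  exact hwt hxb (hxy ▸ hut ⟨hys, hyb⟩)

theorem exists_eqOn_of_eqOn_succ {s : ℕ → Set ι} (hs : Monotone s) (h : ℕ → ι → X)
    (hh : ∀ n, EqOn (h (n + 1)) (h n) (s n)) : ∃ g : ι → X, ∀ n, EqOn g (h n) (s n) := by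
  classical
  have hle : ∀ m n, m ≤ n → EqOn (h n) (h m) (s m) := by
    intro m n hmn
    induction n, hmn using Nat.le_induction with
    | base => exact eqOn_refl _ _
    | succ n hmn ih => exact ((hh n).mono (hs hmn)).trans ih
  refine ⟨fun x => if hx : ∃ n, x ∈ s n then h (Nat.find hx) x else h 0 x, fun n x hx => ?_⟩
  have hx' : ∃ n, x ∈ s n := ⟨n, hx⟩
  simp only [dif_pos hx']
  exact (hle _ n (Nat.find_min' hx' hx) (Nat.find_spec hx')).symm

theorem infinite_iUnion_of_le_card {R : ℕ → Finset X} (hR : ∀ n, n ≤ (R n).card) :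
    (⋃ n, (R n : Set X)).Infinite := fun hfin => by
  have hle :=
    ncard_le_ncard (subset_iUnion (fun n => (R n : Set X)) (hfin.toFinset.card + 1)) hfin
  rw [ncard_coe_finset, ncard_eq_toFinset_card _ hfin] at hle
  exact (hR _).not_gt (Nat.lt_succ_of_le hle)

section LinearOrder
variable [LinearOrder ι]

structure IsCoherentInjection (fam : ι → ι → ℕ) (β : ι) (g : ι → ℕ) : Prop where
  injOn : InjOn g (Iio β)
  eventuallyEq : ∀ α < β, g =ᶠ[cofinite ⊓ 𝓟 (Iio α)] fam α
  infinite_compl_image : (g '' Iio β)ᶜ.Infinite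

theorem IsCoherentInjection.congr_left {fam fam' : ι → ι → ℕ} {β : ι} {g : ι → ℕ}
    (hg : IsCoherentInjection fam β g) (h : ∀ α < β, fam α = fam' α) :
    IsCoherentInjection fam' β g :=
  ⟨hg.injOn, fun α hα => h α hα ▸ hg.eventuallyEq α hα, hg.infinite_compl_image⟩

theorem IsCoherentInjection.eventuallyEq_of_le {fam : ι → ι → ℕ} {α β : ι}
    (hβ : IsCoherentInjection fam β (fam β)) (hαβ : α ≤ β) :
    fam β =ᶠ[cofinite ⊓ 𝓟 (Iio α)] fam α := by
  rcases hαβ.eq_or_lt with rfl | hlt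
  · exact EventuallyEq.rfl
  · exact hβ.eventuallyEq α hlt

theorem isCoherentInjection_bot [OrderBot ι] (fam : ι → ι → ℕ) (g : ι → ℕ) :
    IsCoherentInjection fam ⊥ g :=
  ⟨by simp, by simp, by simpa using infinite_univ⟩

theorem IsCoherentInjection.exists_succ [SuccOrder ι] [NoMaxOrder ι] {fam : ι → ι → ℕ}
    {γ : ι} (hγ : IsCoherentInjection fam γ (fam γ)) :
    ∃ g, IsCoherentInjection fam (Order.succ γ) g := by
  classical
  obtain ⟨n, hn⟩ := hγ.infinite_compl_image.nonempty
  have hEq : EqOn (update (fam γ) γ n) (fam γ) (Iio γ) := fun ξ hξ => update_of_ne hξ.ne _ _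
  refine ⟨update (fam γ) γ n, ?_, fun α hα => ?_, ?_⟩
  · rw [Order.Iio_succ, ← Iio_insert, injOn_insert self_notMem_Iio, hEq.image_eq, update_self]
    exact ⟨hγ.injOn.congr hEq.symm, hn⟩
  · have hα' : α ≤ γ := Order.lt_succ_iff.1 hα
    have hupd : update (fam γ) γ n =ᶠ[cofinite ⊓ 𝓟 (Iio α)] fam γ :=
      ((hEq.mono (Iio_subset_Iio hα')).eventuallyEq).filter_mono inf_le_right
    exact hupd.trans (hγ.eventuallyEq_of_le hα')
  · rw [Order.Iio_succ, ← Iio_insert, image_insert_eq, hEq.image_eq, update_self, insert_eq,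
      compl_union, inter_comm, ← sdiff_eq]
    exact hγ.infinite_compl_image.sdiff (finite_singleton n)

theorem injOn_piecewise_Iio_sdiff {α α' : ι} {h g : ι → X} {B : Set ι}
    (hh : InjOn h (Iio α)) (hg : InjOn g (Iio α'))
    (hB : ∀ y ∈ Ico α α', g y ∈ h '' {x | x ∈ Iio α ∧ h x ≠ g x} → y ∈ B) :
    InjOn ((Iio α).piecewise h g) (Iio α' \ B) := by
  classical
  have hcross : ∀ x < α, ∀ y ∈ Iio α' \ B, α ≤ y → h x ≠ g y := by
    rintro x hx y ⟨hy, hyB⟩ hαy hxy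
    by_cases hxg : h x = g x
    · exact (hg (hx.trans_le (hαy.trans hy.le)) hy (hxg.symm.trans hxy) ▸ hx).not_ge hαy
    · exact hyB (hB y ⟨hαy, hy⟩ ⟨x, ⟨hx, hxg⟩, hxy⟩)
  have hlt : ∀ x < α, (Iio α).piecewise h g x = h x := fun x hx => piecewise_eq_of_mem _ _ _ hx
  have hge : ∀ x, α ≤ x → (Iio α).piecewise h g x = g x := fun x hx =>
    piecewise_eq_of_notMem _ _ _ (notMem_Iio.2 hx)
  intro x hx y hy hxy
  rcases lt_or_ge x α with hxα | hαx <;> rcases lt_or_ge y α with hyα | hαy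
  · rw [hlt x hxα, hlt y hyα] at hxy
    exact hh hxα hyα hxy
  · rw [hlt x hxα, hge y hαy] at hxy
    exact absurd hxy (hcross x hxα y hy hαy)
  · rw [hge x hαx, hlt y hyα] at hxy
    exact absurd hxy.symm (hcross y hyα x hx hαx)
  · rw [hge x hαx, hge y hαy] at hxy
    exact hg hx.1 hy.1 hxy

theorem exists_injOn_Iio_extend {α α' : ι} {h g : ι → ℕ} {R : Set ℕ} (hR : R.Finite)
    (hh : InjOn h (Iio α)) (hhR : MapsTo h (Iio α) Rᶜ)
    (hhg : h =ᶠ[cofinite ⊓ 𝓟 (Iio α)] g)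
    (hg : InjOn g (Iio α')) (hgc : (g '' Iio α')ᶜ.Infinite) :
    ∃ h' : ι → ℕ, InjOn h' (Iio α') ∧ MapsTo h' (Iio α') Rᶜ ∧ EqOn h' h (Iio α) ∧
      h' =ᶠ[cofinite ⊓ 𝓟 (Iio α')] g := by
  classical
  set D := {x | x ∈ Iio α ∧ h x ≠ g x}
  have hD : D.Finite := eventuallyEq_cofinite_inf_principal_iff.1 hhg
  set B := {y | y ∈ Ico α α' ∧ g y ∈ h '' D ∪ R}
  have hB : B.Finite :=
    (((hD.image h).union hR).subset (image_subset_iff.2 fun _ hy => hy.2)).of_finite_image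
      (hg.mono fun _ hy => hy.1.2)
  set u := (Iio α).piecewise h g
  have hlt : ∀ x < α, u x = h x := fun x hx => piecewise_eq_of_mem _ _ _ hx
  have hge : ∀ x, α ≤ x → u x = g x := fun x hx =>
    piecewise_eq_of_notMem _ _ _ (notMem_Iio.2 hx)
  set T := g '' Iio α' ∪ (h '' D ∪ R)
  have hT : Tᶜ.Infinite := by
    rw [compl_union, ← sdiff_eq]
    exact hgc.sdiff ((hD.image h).union hR)
  have huT : MapsTo u (Iio α' \ B) T := by
    intro x hx
    rcases lt_or_ge x α with hxα | hαx
    · rw [hlt x hxα]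
      by_cases hxD : x ∈ D
      · exact Or.inr (Or.inl ⟨x, hxD, rfl⟩)
      · exact Or.inl ⟨x, hx.1, (not_not.1 fun hne => hxD ⟨hxα, hne⟩).symm⟩
    · exact hge x hαx ▸ Or.inl ⟨x, hx.1, rfl⟩
  obtain ⟨v, hv, hvu, hvB⟩ := exists_injOn_of_injOn_sdiff_finite hB hT
    (injOn_piecewise_Iio_sdiff hh hg fun y hy hyD => ⟨hy, Or.inl hyD⟩) huT
  have hvh : EqOn v h (Iio α) := fun x hx =>
    (hvu fun hxB => (not_le.2 hx) hxB.1.1).trans (hlt x hx)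
  refine ⟨v, hv, fun x hx => ?_, hvh, ?_⟩
  · by_cases hxB : x ∈ B
    · exact fun hxR => hvB hxB (Or.inr (Or.inr hxR))
    · rcases lt_or_ge x α with hxα | hαx
      · exact hvh hxα ▸ hhR hxα
      · rw [(hvu hxB).trans (hge x hαx)]
        exact fun hxR => hxB ⟨⟨hαx, hx⟩, Or.inr hxR⟩
  · refine eventuallyEq_cofinite_inf_principal_iff.2 ((hD.union hB).subset ?_)
    rintro x ⟨hx, hne⟩
    by_cases hxB : x ∈ B
    · exact Or.inr hxB
    · rcases lt_or_ge x α with hxα | hαx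
      · exact Or.inl ⟨hxα, hvh hxα ▸ hne⟩
      · exact absurd (hvu hxB ▸ hge x hαx) hne

theorem exists_injOn_Iio_extend_reserve {α α' : ι} {h g : ι → ℕ} {R : Finset ℕ}
    (hh : InjOn h (Iio α)) (hhR : MapsTo h (Iio α) (↑R)ᶜ)
    (hhg : h =ᶠ[cofinite ⊓ 𝓟 (Iio α)] g)
    (hg : InjOn g (Iio α')) (hgc : (g '' Iio α')ᶜ.Infinite) :
    ∃ (h' : ι → ℕ) (r : ℕ), r ∉ R ∧ InjOn h' (Iio α') ∧
      MapsTo h' (Iio α') (↑(insert r R))ᶜ ∧ EqOn h' h (Iio α) ∧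
      h' =ᶠ[cofinite ⊓ 𝓟 (Iio α')] g := by
  classical
  obtain ⟨h', hinj, hR, hh', hh'g⟩ := exists_injOn_Iio_extend R.finite_toSet hh hhR hhg hg hgc
  obtain ⟨r, hr, hrR⟩ := (hh'g.symm.infinite_compl_image hgc).exists_notMem_finset R
  refine ⟨h', r, hrR, hinj, fun x hx => ?_, hh', hh'g⟩
  rw [Finset.coe_insert, mem_compl_iff, mem_insert_iff, not_or]
  exact ⟨fun hxr => hr ⟨x, hx, hxr⟩, hR hx⟩

theorem exists_isCoherentInjection_of_seq {fam : ι → ι → ℕ} {β : ι} {α : ℕ → ι}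
    (hα : Monotone α) (hcof : ∀ ξ < β, ∃ n, ξ < α n)
    (hfam : ∀ n, IsCoherentInjection fam (α n) (fam (α n))) :
    ∃ g, IsCoherentInjection fam β g := by
  classical
  let Inv (n : ℕ) (h : ι → ℕ) (R : Finset ℕ) : Prop :=
    InjOn h (Iio (α n)) ∧ MapsTo h (Iio (α n)) (↑R)ᶜ ∧
      h =ᶠ[cofinite ⊓ 𝓟 (Iio (α n))] fam (α n) ∧ R.card = n
  have step : ∀ n h R, Inv n h R →
      ∃ h' R', Inv (n + 1) h' R' ∧ EqOn h' h (Iio (α n)) ∧ R ⊆ R' := by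
    rintro n h R ⟨hinj, hR, hh, hcard⟩
    have hnext := hfam (n + 1)
    obtain ⟨h', r, hrR, hinj', hR', hh', hh'g⟩ := exists_injOn_Iio_extend_reserve hinj hR
      (hh.trans (hnext.eventuallyEq_of_le (hα n.le_succ)).symm) hnext.injOn
      hnext.infinite_compl_image
    refine ⟨h', insert r R, ⟨hinj', hR', hh'g, ?_⟩, hh', Finset.subset_insert r R⟩
    rw [Finset.card_insert_of_notMem hrR, hcard]
  choose! next nextR hnext hnextEq hnextR using step
  let s (n : ℕ) : (ι → ℕ) × Finset ℕ :=
    Nat.rec (fam (α 0), ∅) (fun n p => (next n p.1 p.2, nextR n p.1 p.2)) n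
  have hs : ∀ n, Inv n (s n).1 (s n).2 := by
    intro n
    induction n with
    | zero => exact ⟨(hfam 0).injOn, fun _ _ => Finset.notMem_empty _, EventuallyEq.rfl, rfl⟩
    | succ n ih => exact hnext n _ _ ih
  have hsR : Monotone fun n => (s n).2 := monotone_nat_of_le_succ fun n => hnextR n _ _ (hs n)
  obtain ⟨g, hg⟩ := exists_eqOn_of_eqOn_succ (fun m n hmn => Iio_subset_Iio (hα hmn))
    (fun n => (s n).1) fun n => hnextEq n _ _ (hs n)
  have hcof₂ : ∀ x < β, ∀ m, ∃ n, m ≤ n ∧ x < α n := fun x hx m => by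
    obtain ⟨k, hk⟩ := hcof x hx
    exact ⟨max m k, le_max_left m k, hk.trans_le (hα (le_max_right m k))⟩
  refine ⟨g, fun x hx y hy hxy => ?_, fun α' hα' => ?_, ?_⟩
  · obtain ⟨k, -, hxk⟩ := hcof₂ x hx 0
    obtain ⟨n, hkn, hyn⟩ := hcof₂ y hy k
    have hxn := hxk.trans_le (hα hkn)
    exact (hs n).1 hxn hyn (by rwa [← hg n hxn, ← hg n hyn])
  · obtain ⟨n, hn⟩ := hcof α' hα'
    have hgn : g =ᶠ[cofinite ⊓ 𝓟 (Iio (α n))] fam (α n) :=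
      ((hg n).eventuallyEq.filter_mono inf_le_right).trans (hs n).2.2.1
    exact (hgn.filter_mono (inf_le_inf_left _ (principal_mono.2 (Iio_subset_Iio hn.le)))).trans
      ((hfam n).eventuallyEq α' hn)
  · have hreserved : (⋃ n, ((s n).2 : Set ℕ)) ⊆ (g '' Iio β)ᶜ := by
      rintro r hr ⟨x, hx, rfl⟩
      obtain ⟨m, hm⟩ := mem_iUnion.1 hr
      obtain ⟨n, hmn, hxn⟩ := hcof₂ x hx m
      exact (hs n).2.1 hxn (hg n hxn ▸ hsR hmn hm)
    exact (infinite_iUnion_of_le_card fun n => (hs n).2.2.2.ge).mono hreserved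

theorem Order.IsSuccLimit.exists_monotone_cofinal {β : ι} (hlim : Order.IsSuccLimit β)
    (hβ : (Iio β).Countable) :
    ∃ α : ℕ → ι, Monotone α ∧ (∀ n, α n < β) ∧ ∀ ξ < β, ∃ n, ξ < α n := by
  have : Countable (Iio β) := hβ.to_subtype
  obtain ⟨a, ha⟩ := not_isMin_iff.1 hlim.not_isMin
  have : Nonempty (Iio β) := ⟨⟨a, ha⟩⟩
  obtain ⟨xs, hmono, htend⟩ := exists_seq_monotone_tendsto_atTop_atTop (Iio β)
  refine ⟨fun n => xs n, fun m n hmn => hmono hmn, fun n => (xs n).2, fun ξ hξ => ?_⟩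
  obtain ⟨c, hcβ, hξc⟩ := hlim.isSuccPrelimit.lt_iff_exists_lt.1 hξ
  obtain ⟨n, hn⟩ := tendsto_atTop_atTop.1 htend ⟨c, hcβ⟩
  exact ⟨n, hξc.trans_le (hn n le_rfl)⟩

end LinearOrder

end

theorem Ordinal.countable_Iio_of_lt_ord_aleph_one {β : Ordinal}
    (hβ : β < (Cardinal.aleph 1).ord) :
    (Iio β).Countable := by
  rw [← Cardinal.le_aleph0_iff_set_countable, Cardinal.mk_Iio_ordinal, Cardinal.lift_le_aleph0,
    ← Cardinal.lt_aleph_one_iff]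
  exact Cardinal.lt_ord.1 hβ

theorem exists_isCoherentInjection_family :
    ∃ f : Ordinal → Ordinal → ℕ,
      ∀ β < (Cardinal.aleph 1).ord, IsCoherentInjection f β (f β) := by
  refine WellFoundedLT.exists_forall_of_extend
    (fun fam β g => β < (Cardinal.aleph 1).ord → IsCoherentInjection fam β g)
    (fun f f' β g hff' hg hβ => (hg hβ).congr_left hff') fun fam β ih => ?_
  by_cases hβ : β < (Cardinal.aleph 1).ord
  swap
  · exact ⟨0, fun h => absurd h hβ⟩
  have ih' : ∀ α < β, IsCoherentInjection fam α (fam α) := fun α hα =>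
    ih α hα (hα.trans hβ)
  suffices ∃ g, IsCoherentInjection fam β g from this.imp fun _ hg _ => hg
  rcases Ordinal.zero_or_succ_or_isSuccLimit β with rfl | ⟨γ, rfl⟩ | hlim
  · exact ⟨0, Ordinal.bot_eq_zero ▸ isCoherentInjection_bot fam 0⟩
  · exact (ih' γ (Order.lt_succ γ)).exists_succ
  · obtain ⟨α, hα, hαβ, hcof⟩ :=
      hlim.exists_monotone_cofinal (Ordinal.countable_Iio_of_lt_ord_aleph_one hβ)
    exact exists_isCoherentInjection_of_seq hα hcof fun n => ih' _ (hαβ n)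

/-- **Lemma.** There is a coherent sequence of injections `f_α : α → ω` (α < ω₁):
each `f_α` is injective on `α`, and for `α < β < ω₁` the functions `f_β` and `f_α`
agree at all but finitely many points of `α`. -/
theorem exists_coherent_injections :
    ∃ f : Ordinal → Ordinal → ℕ,
      (∀ α < (Cardinal.aleph 1).ord, Set.InjOn (f α) (Set.Iio α)) ∧
      (∀ α β : Ordinal, α < β → β < (Cardinal.aleph 1).ord →
        {ξ : Ordinal | ξ < α ∧ f β ξ ≠ f α ξ}.Finite) := by
  obtain ⟨f, hf⟩ := exists_isCoherentInjection_family
  exact ⟨f, fun α hα => (hf α hα).injOn, fun α β hαβ hβ =>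
    eventuallyEq_cofinite_inf_principal_iff.1 ((hf β hβ).eventuallyEq α hαβ)⟩
end

section
/- Let κ be an infinite cardinal. Every automorphism Φ of the Boolean algebra P(ω)/fin extends to an automorphism Ψ of P(κ)/fin, meaning Ψ([A]) = Φ([A]) for every A ⊆ ω, where [A] denotes the class of A modulo finite sets and P(ω)/fin is identified with a subalgebra of P(κ)/fin via [A] ↦ [A]. Moreover, if Φ is nontrivial — i.e., there is no e : ω → ω with Φ([A]) = [e⁻¹[A]] for all A ⊆ ω — then every automorphism Ψ of P(κ)/fin extending Φ is nontrivial, i.e., there is no e : κ → κ with Ψ([A]) = [e⁻¹[A]] for all A ⊆ κ. -/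
noncomputable section

open scoped symmDiff

/-- The Boolean algebra P(X)/fin, as the quotient of the powerset of `X` by the
(equivalence) relation "the symmetric difference is finite". -/
def PFin (X : Type*) : Type _ :=
  Quot (fun A B : Set X => (A ∆ B).Finite)

/-- The quotient map P(X) → P(X)/fin. -/
def pmk {X : Type*} (A : Set X) : PFin X := Quot.mk _ A

/-- `Φ` is an automorphism of the Boolean algebra P(X)/fin: it is bijective and
respects, on representatives, union, intersection and complementation. -/
def IsBAAut {X : Type*} (Φ : PFin X → PFin X) : Prop :=
  Function.Bijective Φ ∧
  (∀ A B A' B' : Set X, Φ (pmk A) = pmk A' → Φ (pmk B) = pmk B' →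
      Φ (pmk (A ∪ B)) = pmk (A' ∪ B') ∧ Φ (pmk (A ∩ B)) = pmk (A' ∩ B')) ∧
  (∀ A A' : Set X, Φ (pmk A) = pmk A' → Φ (pmk Aᶜ) = pmk A'ᶜ)

/-- `Φ` is a trivial automorphism of P(X)/fin: it is induced by a function `e : X → X`
via `[A] ↦ [e⁻¹[A]]`. -/
def IsTrivialAut {X : Type*} (Φ : PFin X → PFin X) : Prop :=
  ∃ e : X → X, ∀ A : Set X, Φ (pmk A) = pmk (e ⁻¹' A)

/-- The underlying set of the cardinal κ: the ordinals below κ. -/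
abbrev KType (κ : Cardinal.{0}) : Type 1 := ↥(Set.Iio κ.ord)

/-- The inclusion P(ω) → P(κ) induced by ω ⊆ κ (identifying `n < ω` with the
corresponding ordinal below κ). -/
def inclSet (κ : Cardinal.{0}) (A : Set ℕ) : Set (KType κ) :=
  {x : KType κ | ∃ n ∈ A, ((n : ℕ) : Ordinal) = (x : Ordinal)}

/-- `Ψ` extends `Φ` along the identification of P(ω)/fin with a subalgebra of P(κ)/fin:
`Ψ([A]) = Φ([A])` for every `A ⊆ ω`. -/
def Extends (κ : Cardinal.{0}) (Φ : PFin ℕ → PFin ℕ)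
    (Ψ : PFin (KType κ) → PFin (KType κ)) : Prop :=
  ∀ A A' : Set ℕ, Φ (pmk A) = pmk A' → Ψ (pmk (inclSet κ A)) = pmk (inclSet κ A')

/-!
For an injection `ι : α → X`, `P(X) ≅ P(α) × P(X ∖ ι[α])`: the pair `(A, S)` is glued to
`ι[A] ∪ (S ∖ ι[α])`. Since the Boolean operations act coordinatewise and the splitting respects
finite differences, `Φ × id` is an automorphism of P(X)/fin extending `Φ`.

Conversely, if an automorphism induced by `e : X → X` extends `Φ`, then, as `Φ` fixes `[α]`, the set
`e⁻¹[ι[α]]` is almost `ι[α]`: all but finitely many `a` have `e (ι a) ∈ ι[α]`, and `ι⁻¹ ∘ e ∘ ι`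
then induces `Φ`.
-/

namespace PFin

variable {α X : Type*}

theorem pmk_eq_pmk_iff {A B : Set X} : pmk A = pmk B ↔ (A ∆ B).Finite := by
  refine Quot.eq.trans (Equivalence.eqvGen_iff ⟨fun A => ?_, fun h => ?_, fun h₁ h₂ => ?_⟩)
  · simp
  · rwa [symmDiff_comm]
  · exact (h₁.union h₂).subset (symmDiff_triangle _ _ _)

theorem exists_pmk_eq (x : PFin X) : ∃ A, pmk A = x := Quot.exists_rep x

theorem pmk_union_congr {S T S' T' : Set X} (hS : pmk S = pmk S') (hT : pmk T = pmk T') :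
    pmk (S ∪ T) = pmk (S' ∪ T') := by
  rw [pmk_eq_pmk_iff] at *
  exact (hS.union hT).subset Set.union_symmDiff_union_subset

theorem pmk_compl_congr {S S' : Set X} (h : pmk S = pmk S') : pmk Sᶜ = pmk S'ᶜ := by
  rwa [pmk_eq_pmk_iff, compl_symmDiff_compl, ← pmk_eq_pmk_iff]

theorem pmk_inter_congr {S T S' T' : Set X} (hS : pmk S = pmk S') (hT : pmk T = pmk T') :
    pmk (S ∩ T) = pmk (S' ∩ T') := by
  simpa only [Set.compl_union, compl_compl] using
    pmk_compl_congr (pmk_union_congr (pmk_compl_congr hS) (pmk_compl_congr hT))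

theorem pmk_image_congr (f : α → X) {A B : Set α} (h : pmk A = pmk B) :
    pmk (f '' A) = pmk (f '' B) := by
  rw [pmk_eq_pmk_iff] at *
  exact (h.image f).subset fun x hx => by grind

theorem pmk_preimage_congr {f : α → X} (hf : Function.Injective f) {S T : Set X}
    (h : pmk S = pmk T) : pmk (f ⁻¹' S) = pmk (f ⁻¹' T) := by
  rw [pmk_eq_pmk_iff] at *
  rw [← Set.preimage_symmDiff]
  exact h.preimage hf.injOn

theorem _root_.IsBAAut.map_univ {Φ : PFin X → PFin X} (hΦ : IsBAAut Φ) :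
    Φ (pmk Set.univ) = pmk Set.univ := by
  obtain ⟨A, hA⟩ := exists_pmk_eq (Φ (pmk ∅))
  simpa using (hΦ.2.1 _ _ _ _ hA.symm (hΦ.2.2 _ _ hA.symm)).1

def ExtendsAlong (ι : α → X) (Φ : PFin α → PFin α) (Ψ : PFin X → PFin X) : Prop :=
  ∀ A A' : Set α, Φ (pmk A) = pmk A' → Ψ (pmk (ι '' A)) = pmk (ι '' A')

section Glue

variable {ι : α → X}

def glue (ι : α → X) (A : Set α) (S : Set X) : Set X := ι '' A ∪ S \ Set.range ι

theorem apply_mem_glue_iff (hι : Function.Injective ι) {a : α} {A : Set α} {S : Set X} :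
    ι a ∈ glue ι A S ↔ a ∈ A := by
  simp [glue, hι.mem_set_image]

theorem mem_glue_iff_of_notMem_range {x : X} (hx : x ∉ Set.range ι) {A : Set α} {S : Set X} :
    x ∈ glue ι A S ↔ x ∈ S := by
  simp only [glue, Set.mem_union, Set.mem_sdiff, hx, not_false_eq_true, and_true,
    or_iff_right_iff_imp]
  exact fun h => absurd (Set.image_subset_range ι A h) hx

theorem ext_range_and_compl (ι : α → X) {S T : Set X}
    (h₁ : ∀ a, ι a ∈ S ↔ ι a ∈ T) (h₂ : ∀ x ∉ Set.range ι, x ∈ S ↔ x ∈ T) : S = T := by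
  ext x
  by_cases hx : x ∈ Set.range ι
  · obtain ⟨a, rfl⟩ := hx
    exact h₁ a
  · exact h₂ x hx

theorem glue_union (A B : Set α) (S T : Set X) :
    glue ι A S ∪ glue ι B T = glue ι (A ∪ B) (S ∪ T) := by
  simp only [glue, Set.image_union]
  grind

theorem glue_inter (hι : Function.Injective ι) (A B : Set α) (S T : Set X) :
    glue ι A S ∩ glue ι B T = glue ι (A ∩ B) (S ∩ T) :=
  ext_range_and_compl ι (fun _ => by simp [apply_mem_glue_iff hι])
    (fun _ hx => by simp [mem_glue_iff_of_notMem_range hx])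

theorem glue_compl (hι : Function.Injective ι) (A : Set α) (S : Set X) :
    (glue ι A S)ᶜ = glue ι Aᶜ Sᶜ :=
  ext_range_and_compl ι (fun _ => by simp [apply_mem_glue_iff hι])
    (fun _ hx => by simp [mem_glue_iff_of_notMem_range hx])

theorem preimage_glue (hι : Function.Injective ι) (A : Set α) (S : Set X) :
    ι ⁻¹' glue ι A S = A := by
  ext a
  exact apply_mem_glue_iff hι

theorem glue_glue (hι : Function.Injective ι) (A B : Set α) (S : Set X) :
    glue ι B (glue ι A S) = glue ι B S :=
  ext_range_and_compl ι (fun _ => by simp [apply_mem_glue_iff hι])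
    (fun _ hx => by simp [mem_glue_iff_of_notMem_range hx])

theorem glue_preimage_self (hι : Function.Injective ι) (S : Set X) : glue ι (ι ⁻¹' S) S = S :=
  ext_range_and_compl ι (fun _ => by simp [apply_mem_glue_iff hι])
    (fun _ hx => by simp [mem_glue_iff_of_notMem_range hx])

theorem glue_image (hι : Function.Injective ι) (A B : Set α) : glue ι A (ι '' B) = ι '' A :=
  ext_range_and_compl ι (fun _ => by simp [apply_mem_glue_iff hι, hι.mem_set_image])
    (fun _ hx => by simp only [mem_glue_iff_of_notMem_range hx, Set.mem_image]; grind)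

theorem pmk_glue_congr {A A' : Set α} {S S' : Set X} (hA : pmk A = pmk A')
    (hS : pmk S = pmk S') : pmk (glue ι A S) = pmk (glue ι A' S') :=
  pmk_union_congr (pmk_image_congr ι hA) <|
    pmk_inter_congr hS (pmk_compl_congr (S := Set.range ι) rfl)

end Glue

section Extension

variable {ι : α → X} (hι : Function.Injective ι) {Φ Φ' : PFin α → PFin α}

def extendAlong (Φ : PFin α → PFin α) : PFin X → PFin X :=
  Quot.lift (fun S => pmk (glue ι (Φ (pmk (ι ⁻¹' S))).out S)) fun _ _ h => by
    have hS : pmk _ = pmk _ := Quot.sound h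
    rw [pmk_preimage_congr hι hS]
    exact pmk_glue_congr rfl hS

theorem extendAlong_pmk {S : Set X} {A : Set α} (h : Φ (pmk (ι ⁻¹' S)) = pmk A) :
    extendAlong hι Φ (pmk S) = pmk (glue ι A S) :=
  pmk_glue_congr ((Quot.out_eq _).trans h) rfl

theorem extendAlong_leftInverse (h : Function.LeftInverse Φ' Φ) :
    Function.LeftInverse (extendAlong hι Φ') (extendAlong hι Φ) := by
  intro x
  obtain ⟨S, rfl⟩ := exists_pmk_eq x
  obtain ⟨A, hA⟩ := exists_pmk_eq (Φ (pmk (ι ⁻¹' S)))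
  have hA' : Φ' (pmk (ι ⁻¹' glue ι A S)) = pmk (ι ⁻¹' S) := by
    rw [preimage_glue hι, hA, h]
  rw [extendAlong_pmk hι hA.symm, extendAlong_pmk hι hA', glue_glue hι,
    glue_preimage_self hι]

theorem isBAAut_extendAlong (hΦ : IsBAAut Φ) : IsBAAut (extendAlong hι Φ) := by
  obtain ⟨hbij, hunion_inter, hcompl⟩ := hΦ
  obtain ⟨Φ', hleft, hright⟩ := Function.bijective_iff_has_inverse.mp hbij
  refine ⟨Function.bijective_iff_has_inverse.mpr ⟨extendAlong hι Φ',
      extendAlong_leftInverse hι hleft, extendAlong_leftInverse hι hright⟩, ?_, ?_⟩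
  · intro S T S' T' hS hT
    obtain ⟨A, hA⟩ := exists_pmk_eq (Φ (pmk (ι ⁻¹' S)))
    obtain ⟨B, hB⟩ := exists_pmk_eq (Φ (pmk (ι ⁻¹' T)))
    rw [extendAlong_pmk hι hA.symm] at hS
    rw [extendAlong_pmk hι hB.symm] at hT
    obtain ⟨hAB, hAB'⟩ := hunion_inter _ _ _ _ hA.symm hB.symm
    rw [← Set.preimage_union] at hAB
    rw [← Set.preimage_inter] at hAB'
    rw [extendAlong_pmk hι hAB, extendAlong_pmk hι hAB', ← glue_union, ← glue_inter hι]
    exact ⟨pmk_union_congr hS hT, pmk_inter_congr hS hT⟩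
  · intro S S' hS
    obtain ⟨A, hA⟩ := exists_pmk_eq (Φ (pmk (ι ⁻¹' S)))
    rw [extendAlong_pmk hι hA.symm] at hS
    have hAc := hcompl _ _ hA.symm
    rw [← Set.preimage_compl] at hAc
    rw [extendAlong_pmk hι hAc, ← glue_compl hι]
    exact pmk_compl_congr hS

theorem extendsAlong_extendAlong : ExtendsAlong ι Φ (extendAlong hι Φ) := fun A A' h => by
  rw [extendAlong_pmk hι (by rwa [hι.preimage_image]), glue_image hι]

end Extension

theorem isTrivialAut_of_extendsAlong [Nonempty α] {ι : α → X} (hι : Function.Injective ι)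
    {Φ : PFin α → PFin α} {Ψ : PFin X → PFin X} (hΦ : Φ (pmk Set.univ) = pmk Set.univ)
    (hext : ExtendsAlong ι Φ Ψ) (hΨ : IsTrivialAut Ψ) : IsTrivialAut Φ := by
  obtain ⟨e, he⟩ := hΨ
  have hpull : ∀ {A A'}, Φ (pmk A) = pmk A' → pmk (ι ⁻¹' (e ⁻¹' (ι '' A))) = pmk A' :=
    fun h => by
      simpa only [hι.preimage_image] using pmk_preimage_congr hι ((he _).symm.trans (hext _ _ h))
  have hexceptional : {a | e (ι a) ∉ Set.range ι}.Finite := by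
    have := pmk_eq_pmk_iff.mp (hpull hΦ)
    rwa [Set.image_univ, ← Set.top_eq_univ, symmDiff_top] at this
  refine ⟨Function.invFun ι ∘ e ∘ ι, fun A => ?_⟩
  obtain ⟨A', hA'⟩ := exists_pmk_eq (Φ (pmk A))
  rw [← hA', ← hpull hA'.symm, pmk_eq_pmk_iff]
  refine hexceptional.subset fun a ha hrange => ?_
  have : e (ι a) ∈ ι '' A ↔ Function.invFun ι (e (ι a)) ∈ A := by
    rw [← hι.mem_set_image, Function.invFun_eq hrange]
  simp [Set.mem_symmDiff, this] at ha

def natToIio (κ : Cardinal.{0}) (hκ : Cardinal.aleph0 ≤ κ) (n : ℕ) : KType κ :=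
  ⟨n, (Ordinal.natCast_lt_omega0 n).trans_le (Cardinal.omega0_le_ord.mpr hκ)⟩

theorem natToIio_injective (κ : Cardinal.{0}) (hκ : Cardinal.aleph0 ≤ κ) :
    Function.Injective (natToIio κ hκ) :=
  fun _ _ h => Nat.cast_injective (R := Ordinal) (congrArg Subtype.val h)

theorem extends_iff_extendsAlong (κ : Cardinal.{0}) (hκ : Cardinal.aleph0 ≤ κ)
    (Φ : PFin ℕ → PFin ℕ) (Ψ : PFin (KType κ) → PFin (KType κ)) :
    Extends κ Φ Ψ ↔ ExtendsAlong (natToIio κ hκ) Φ Ψ := by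
  have : ∀ A, inclSet κ A = natToIio κ hκ '' A := fun A => by
    ext x
    simp [inclSet, natToIio, Subtype.ext_iff]
  simp only [Extends, ExtendsAlong, this]

end PFin

/-- **Proposition.** Let κ be an infinite cardinal.  Every automorphism `Φ` of P(ω)/fin
extends to an automorphism `Ψ` of P(κ)/fin; moreover, if `Φ` is nontrivial then every
automorphism of P(κ)/fin extending `Φ` is nontrivial. -/
theorem aut_PFin_extends (κ : Cardinal.{0}) (hκ : Cardinal.aleph0 ≤ κ)
    (Φ : PFin ℕ → PFin ℕ) (hΦ : IsBAAut Φ) :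
    (∃ Ψ : PFin (KType κ) → PFin (KType κ), IsBAAut Ψ ∧ Extends κ Φ Ψ) ∧
    (¬ IsTrivialAut Φ →
      ∀ Ψ : PFin (KType κ) → PFin (KType κ), IsBAAut Ψ → Extends κ Φ Ψ →
        ¬ IsTrivialAut Ψ) := by
  have hι := PFin.natToIio_injective κ hκ
  refine ⟨⟨PFin.extendAlong hι Φ, PFin.isBAAut_extendAlong hι hΦ, ?_⟩,
    fun hΦnt Ψ _ hext hΨ => ?_⟩
  · exact (PFin.extends_iff_extendsAlong κ hκ Φ _).mpr (PFin.extendsAlong_extendAlong hι)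
  · exact hΦnt (PFin.isTrivialAut_of_extendsAlong hι hΦ.map_univ
      ((PFin.extends_iff_extendsAlong κ hκ Φ Ψ).mp hext) hΨ)
end
end
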